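/- arXiv:2506.08438 — 10 statements merged into one kernel-verified Lean document; each statement's English description precedes it below -/
import Mathlib

section
/- (Revelation principle, Lemma 2.1.) Under the stated assumptions: (i) the incentive-compatible feasible set is nonempty, and moreover there exist a coordination mechanism π̂ satisfying all the incentive-compatibility constraints and a real δ > 0 such that every π with ⟨π_θ, 𝟙⟩ = 1 for every θ and ‖π − π̂‖₂ ≤ δ (Euclidean norm over all |Θ|·|𝒳| entries) is again a coordination mechanism satisfying all the incentive-compatibility constraints; and (ii) u_LP = u*. -/
open Finset
open scoped InnerProductSpace

/-!
Fix one row `p := π̄_{θ₀}` of the interior point: every vector with entries summing to one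
within `ε` of `p` is nonnegative. Take `π̂_θ := p + (ε/2) v̄_θ`. Because the rows of a
mechanism sum to one, `⟨v_θ, π_θ - π_θ'⟩` is a nonnegative multiple of `⟨v̄_θ, π_θ - π_θ'⟩`,
and for `π̂` the latter equals `(ε/4) ‖v̄_θ - v̄_θ'‖² > 0`, the `v̄_θ` being distinct unit
vectors. This margin, and nonnegativity, survive perturbations of size `δ` small compared
with `ε` and `min_{θ ≠ θ'} ‖v̄_θ - v̄_θ'‖²`.

For (ii), an IC mechanism with truthful reporting is feasible for OPT, and conversely
`θ ↦ Π_{r θ}` is an IC mechanism with the same value.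
-/

section Euclidean

variable {ι : Type*} [Fintype ι]

lemma norm_toLp_eq_sqrt (q : ι → ℝ) :
    ‖(WithLp.toLp 2 q : EuclideanSpace ℝ ι)‖ = √(∑ i, q i ^ 2) := by
  simp [EuclideanSpace.norm_eq]

lemma inner_toLp_eq_sum (a b : ι → ℝ) :
    ⟪(WithLp.toLp 2 a : EuclideanSpace ℝ ι), WithLp.toLp 2 b⟫_ℝ = ∑ i, a i * b i := by
  simp [EuclideanSpace.inner_toLp_toLp, dotProduct, mul_comm]

lemma sqrt_sum_sq_le_sqrt_sum_sum_sq {κ : Type*} [Fintype κ] (e : κ → ι → ℝ) (k : κ) :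
    √(∑ i, e k i ^ 2) ≤ √(∑ k', ∑ i, e k' i ^ 2) :=
  Real.sqrt_le_sqrt <|
    single_le_sum (fun _ _ => sum_nonneg fun _ _ => sq_nonneg _) (mem_univ k)

end Euclidean

lemma exists_pos_forall_le_of_finite {ι : Type*} [Finite ι] {p : ι → Prop} {a : ι → ℝ}
    (ha : ∀ i, p i → 0 < a i) : ∃ δ > 0, ∀ i, p i → δ ≤ a i := by
  have : ∀ᶠ δ in nhdsWithin (0 : ℝ) (Set.Ioi 0), ∀ i, p i → δ ≤ a i := by
    refine Filter.eventually_all.2 fun i => ?_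
    by_cases hi : p i
    · exact ((eventually_le_nhds (ha i hi)).filter_mono nhdsWithin_le_nhds).mono
        fun _ hδ _ => hδ
    · exact Filter.Eventually.of_forall fun _ h => absurd h hi
  obtain ⟨δ, hδ, hδ0⟩ := (this.and self_mem_nhdsWithin).exists
  exact ⟨δ, hδ0, hδ⟩

lemma inner_sub_nonneg_of_near {E : Type*} [NormedAddCommGroup E] [InnerProductSpace ℝ E]
    {a b m x y : E} {t δ : ℝ} (ht : 0 ≤ t) (ha : ‖a‖ = 1) (hb : ‖b‖ ≤ 1)
    (hx : ‖x - (m + t • a)‖ ≤ δ) (hy : ‖y - (m + t • b)‖ ≤ δ)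
    (hδ : 4 * δ ≤ t * ‖a - b‖ ^ 2) : 0 ≤ ⟪a, x - y⟫_ℝ := by
  have hsplit : x - y = t • (a - b) + (x - (m + t • a)) - (y - (m + t • b)) := by module
  have hgap : ‖a - b‖ ^ 2 / 2 ≤ ⟪a, a - b⟫_ℝ := by
    rw [norm_sub_sq_real, inner_sub_right, real_inner_self_eq_norm_sq, ha]
    nlinarith [norm_nonneg b]
  have hbound (e : E) (he : ‖e‖ ≤ δ) : |⟪a, e⟫_ℝ| ≤ δ :=
    (abs_real_inner_le_norm a e).trans (by rwa [ha, one_mul])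
  have hex := abs_le.1 (hbound _ hx)
  have hey := abs_le.1 (hbound _ hy)
  rw [hsplit, inner_sub_right, inner_add_right, real_inner_smul_right]
  nlinarith

section Normalization

variable {𝒳 : Type*} [Fintype 𝒳]

noncomputable def centered (v : 𝒳 → ℝ) (x : 𝒳) : ℝ := v x - (∑ y, v y) / Fintype.card 𝒳

noncomputable def unitCentered (v : 𝒳 → ℝ) (x : 𝒳) : ℝ :=
  centered v x / √(∑ y, centered v y ^ 2)

lemma sum_centered [Nonempty 𝒳] (v : 𝒳 → ℝ) : ∑ x, centered v x = 0 := by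
  have hcard : (Fintype.card 𝒳 : ℝ) ≠ 0 := by positivity
  simp [centered, sum_sub_distrib, mul_div_cancel₀ _ hcard]

lemma sum_unitCentered [Nonempty 𝒳] (v : 𝒳 → ℝ) : ∑ x, unitCentered v x = 0 := by
  simp [unitCentered, ← sum_div, sum_centered]

lemma norm_toLp_unitCentered {v : 𝒳 → ℝ} (hv : ¬∃ c : ℝ, v = fun _ => c) :
    ‖(WithLp.toLp 2 (unitCentered v) : EuclideanSpace ℝ 𝒳)‖ = 1 := by
  have hne : (WithLp.toLp 2 (centered v) : EuclideanSpace ℝ 𝒳) ≠ 0 := by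
    refine fun h => hv ⟨(∑ y, v y) / Fintype.card 𝒳, funext fun x => ?_⟩
    simpa [centered, sub_eq_zero] using congrFun (congrArg WithLp.ofLp h) x
  have hsmul : (WithLp.toLp 2 (unitCentered v) : EuclideanSpace ℝ 𝒳) =
      ‖(WithLp.toLp 2 (centered v) : EuclideanSpace ℝ 𝒳)‖⁻¹ • WithLp.toLp 2 (centered v) := by
    ext x
    simp [unitCentered, norm_toLp_eq_sqrt, div_eq_inv_mul]
  rw [hsmul, norm_smul, norm_inv, norm_norm, inv_mul_cancel₀ (norm_ne_zero_iff.2 hne)]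

lemma eq_mul_unitCentered_add (v : 𝒳 → ℝ) (x : 𝒳) :
    v x = √(∑ y, centered v y ^ 2) * unitCentered v x + (∑ y, v y) / Fintype.card 𝒳 := by
  rcases eq_or_ne (√(∑ y, centered v y ^ 2)) 0 with h | h
  · have hsq := (sum_eq_zero_iff_of_nonneg fun y _ => sq_nonneg (centered v y)).1
      (Real.sqrt_eq_zero (sum_nonneg fun y _ => sq_nonneg _) |>.1 h) x (mem_univ x)
    have := pow_eq_zero_iff (n := 2) two_ne_zero |>.1 hsq
    simp only [centered, sub_eq_zero] at this
    simp [h, this]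
  · rw [unitCentered, mul_div_cancel₀ _ h, centered, sub_add_cancel]

lemma sum_mul_le_sum_mul_of_unitCentered {v p q : 𝒳 → ℝ} (hpq : ∑ x, p x = ∑ x, q x)
    (h : 0 ≤ ∑ x, unitCentered v x * (p x - q x)) : ∑ x, v x * q x ≤ ∑ x, v x * p x := by
  set N := √(∑ y, centered v y ^ 2)
  set c := (∑ y, v y) / Fintype.card 𝒳
  have hsplit : ∑ x, v x * p x - ∑ x, v x * q x =
      N * ∑ x, unitCentered v x * (p x - q x) + c * (∑ x, p x - ∑ x, q x) := by
    simp only [← sum_sub_distrib, mul_sum, ← sum_add_distrib]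
    refine sum_congr rfl fun x _ => ?_
    rw [eq_mul_unitCentered_add v x]
    ring
  rw [hpq, sub_self, mul_zero, add_zero] at hsplit
  nlinarith [Real.sqrt_nonneg (∑ y, centered v y ^ 2)]

end Normalization

section Mechanism

variable {Θ 𝒳 : Type*} [Fintype Θ] [Fintype 𝒳]

lemma nonneg_of_sqrt_sum_sq_sub_le {πbar : Θ → 𝒳 → ℝ} {ε : ℝ}
    (hπbar1 : ∀ θ, ∑ x, πbar θ x = 1)
    (hinterior : ∀ π : Θ → 𝒳 → ℝ, (∀ θ, ∑ x, π θ x = 1) →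
      √(∑ θ, ∑ x, (π θ x - πbar θ x) ^ 2) ≤ ε → ∀ θ x, 0 ≤ π θ x)
    (θ₀ : Θ) {q : 𝒳 → ℝ} (hq1 : ∑ x, q x = 1) (hq : √(∑ x, (q x - πbar θ₀ x) ^ 2) ≤ ε)
    (x : 𝒳) : 0 ≤ q x := by
  classical
  have hrows (θ : Θ) : ∑ x, Function.update πbar θ₀ q θ x = 1 := by
    rcases eq_or_ne θ θ₀ with rfl | h <;> simp [*]
  have hdist : ∑ θ, ∑ x, (Function.update πbar θ₀ q θ x - πbar θ x) ^ 2 =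
      ∑ x, (q x - πbar θ₀ x) ^ 2 :=
    (sum_eq_single θ₀ (fun θ _ h => by simp [h]) (by simp)).trans (by simp)
  simpa using hinterior _ hrows (hdist ▸ hq) θ₀ x

lemma ic_values_eq_best_response_values (f : Θ → ℝ) (u v : Θ → 𝒳 → ℝ) :
    {s : ℝ | ∃ π : Θ → 𝒳 → ℝ,
        (∀ θ x, 0 ≤ π θ x) ∧ (∀ θ, ∑ x, π θ x = 1) ∧
        (∀ θ θ' : Θ, θ ≠ θ' → ∑ x, v θ x * π θ' x ≤ ∑ x, v θ x * π θ x) ∧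
        s = ∑ θ, f θ * ∑ x, u θ x * π θ x} =
      {s : ℝ | ∃ (π : Θ → 𝒳 → ℝ) (r : Θ → Θ),
        (∀ θ x, 0 ≤ π θ x) ∧ (∀ θ, ∑ x, π θ x = 1) ∧
        (∀ θ θ'' : Θ, ∑ x, v θ x * π θ'' x ≤ ∑ x, v θ x * π (r θ) x) ∧
        s = ∑ θ, f θ * ∑ x, u θ x * π (r θ) x} := by
  ext s
  constructor
  · rintro ⟨π, hnonneg, hrows, hIC, rfl⟩
    refine ⟨π, id, hnonneg, hrows, fun θ θ'' => ?_, rfl⟩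
    rcases eq_or_ne θ θ'' with rfl | h
    · exact le_rfl
    · exact hIC θ θ'' h
  · rintro ⟨π, r, hnonneg, hrows, hbest, rfl⟩
    exact ⟨fun θ => π (r θ), fun θ => hnonneg (r θ), fun θ => hrows (r θ),
      fun θ θ' _ => hbest θ (r θ'), rfl⟩

end Mechanism

theorem exists_interior_ic_mechanism
    {Θ 𝒳 : Type*} [Fintype Θ] [Fintype 𝒳] [Nonempty Θ] [Nonempty 𝒳] {v vbar : Θ → 𝒳 → ℝ}
    (hnondeg : ∀ θ, ¬∃ c : ℝ, v θ = fun _ => c)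
    (hvbar : ∀ θ, vbar θ = unitCentered (v θ))
    (hdistinct : ∀ θ θ' : Θ, θ ≠ θ' → vbar θ ≠ vbar θ')
    {πbar : Θ → 𝒳 → ℝ} {ε : ℝ} (hε : 0 < ε) (hπbar1 : ∀ θ, ∑ x, πbar θ x = 1)
    (hinterior : ∀ π : Θ → 𝒳 → ℝ, (∀ θ, ∑ x, π θ x = 1) →
      √(∑ θ, ∑ x, (π θ x - πbar θ x) ^ 2) ≤ ε → ∀ θ x, 0 ≤ π θ x) :
    ∃ (πhat : Θ → 𝒳 → ℝ) (δ : ℝ), 0 < δ ∧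
      (∀ θ x, 0 ≤ πhat θ x) ∧ (∀ θ, ∑ x, πhat θ x = 1) ∧
      (∀ θ θ' : Θ, θ ≠ θ' → ∑ x, v θ x * πhat θ' x ≤ ∑ x, v θ x * πhat θ x) ∧
      ∀ π : Θ → 𝒳 → ℝ, (∀ θ, ∑ x, π θ x = 1) →
        √(∑ θ, ∑ x, (π θ x - πhat θ x) ^ 2) ≤ δ →
          (∀ θ x, 0 ≤ π θ x) ∧
            ∀ θ θ' : Θ, θ ≠ θ' → ∑ x, v θ x * π θ' x ≤ ∑ x, v θ x * π θ x := by
  obtain ⟨θ₀⟩ := ‹Nonempty Θ›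
  let V (θ : Θ) : EuclideanSpace ℝ 𝒳 := WithLp.toLp 2 (vbar θ)
  have hV (θ : Θ) : ‖V θ‖ = 1 := by
    simpa only [V, hvbar] using norm_toLp_unitCentered (hnondeg θ)
  set t := ε / 2 with ht
  have ht0 : 0 < t := half_pos hε
  obtain ⟨δ, hδ0, hδ⟩ := exists_pos_forall_le_of_finite (p := fun i : Θ × Θ => i.1 ≠ i.2)
    (a := fun i => t * ‖V i.1 - V i.2‖ ^ 2 / 4) fun i hi => by
      have := sub_ne_zero.2 ((WithLp.toLp_injective 2).ne (hdistinct _ _ hi))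
      positivity
  let πhat (θ : Θ) : 𝒳 → ℝ := πbar θ₀ + t • vbar θ
  have hπhat1 (θ : Θ) : ∑ x, πhat θ x = 1 := by
    simp [πhat, sum_add_distrib, ← mul_sum, hπbar1, hvbar, sum_unitCentered]
  have hnear (π : Θ → 𝒳 → ℝ) (hπ1 : ∀ θ, ∑ x, π θ x = 1)
      (hπ : √(∑ θ, ∑ x, (π θ x - πhat θ x) ^ 2) ≤ min δ t) :
      (∀ θ x, 0 ≤ π θ x) ∧
        ∀ θ θ' : Θ, θ ≠ θ' → ∑ x, v θ x * π θ' x ≤ ∑ x, v θ x * π θ x := by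
    have hrow (θ : Θ) :
        ‖WithLp.toLp 2 (π θ) - (WithLp.toLp 2 (πbar θ₀) + t • V θ)‖ ≤ min δ t := by
      rw [← WithLp.toLp_smul, ← WithLp.toLp_add, ← WithLp.toLp_sub, norm_toLp_eq_sqrt]
      exact (sqrt_sum_sq_le_sqrt_sum_sum_sq (fun θ x => π θ x - πhat θ x) θ).trans hπ
    refine ⟨fun θ => nonneg_of_sqrt_sum_sq_sub_le hπbar1 hinterior θ₀ (hπ1 θ) ?_,
      fun θ θ' hne => sum_mul_le_sum_mul_of_unitCentered ((hπ1 θ).trans (hπ1 θ').symm) ?_⟩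
    · rw [← norm_toLp_eq_sqrt]
      calc ‖WithLp.toLp 2 (π θ - πbar θ₀)‖
          = ‖(WithLp.toLp 2 (π θ) - (WithLp.toLp 2 (πbar θ₀) + t • V θ)) + t • V θ‖ := by
            congr 1; simp only [WithLp.toLp_sub]; abel
        _ ≤ min δ t + t := by
            refine norm_add_le_of_le (hrow θ) ?_
            rw [norm_smul, hV, mul_one, Real.norm_of_nonneg ht0.le]
        _ ≤ ε := by linarith [min_le_right δ t]
    · rw [← hvbar, ← inner_toLp_eq_sum]
      refine inner_sub_nonneg_of_near ht0.le (hV θ) (hV θ').le (hrow θ) (hrow θ') ?_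
      linarith [min_le_left δ t, hδ (θ, θ') hne]
  have hπhat := hnear πhat hπhat1 (by simp [hδ0.le, ht0.le])
  exact ⟨πhat, min δ t, lt_min hδ0 ht0, hπhat.1, hπhat1, hπhat.2, hnear⟩

theorem revelation_principle_general
    {Θ 𝒳 : Type*} [Fintype Θ] [Fintype 𝒳] [Nonempty Θ] [Nonempty 𝒳]
    (f : Θ → ℝ) (u v : Θ → 𝒳 → ℝ)
    -- non-degenerate rewards: `v θ` is not a scalar multiple of the all-ones vector
    (hnondeg : ∀ θ, ¬∃ c : ℝ, v θ = fun _ => c)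
    -- the normalized reward vectors, pairwise distinct
    (vbar : Θ → 𝒳 → ℝ)
    (hvbar : ∀ θ x, vbar θ x =
      (v θ x - (∑ y, v θ y) / (Fintype.card 𝒳 : ℝ)) /
        Real.sqrt (∑ y, (v θ y - (∑ z, v θ z) / (Fintype.card 𝒳 : ℝ)) ^ 2))
    (hdistinct : ∀ θ θ' : Θ, θ ≠ θ' → vbar θ ≠ vbar θ')
    -- interior-point assumption
    (πbar : Θ → 𝒳 → ℝ) (ε : ℝ) (hε : 0 < ε)
    (hπbar1 : ∀ θ, ∑ x, πbar θ x = 1)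
    (hinterior : ∀ π : Θ → 𝒳 → ℝ, (∀ θ, ∑ x, π θ x = 1) →
      Real.sqrt (∑ θ, ∑ x, (π θ x - πbar θ x) ^ 2) ≤ ε → ∀ θ x, 0 ≤ π θ x) :
    -- (i) feasibility with an interior point for the IC constraints
    (∃ (πhat : Θ → 𝒳 → ℝ) (δ : ℝ), 0 < δ ∧
      (∀ θ x, 0 ≤ πhat θ x) ∧ (∀ θ, ∑ x, πhat θ x = 1) ∧
      (∀ θ θ' : Θ, θ ≠ θ' → ∑ x, v θ x * πhat θ' x ≤ ∑ x, v θ x * πhat θ x) ∧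
      ∀ π : Θ → 𝒳 → ℝ, (∀ θ, ∑ x, π θ x = 1) →
        Real.sqrt (∑ θ, ∑ x, (π θ x - πhat θ x) ^ 2) ≤ δ →
          (∀ θ x, 0 ≤ π θ x) ∧
            ∀ θ θ' : Θ, θ ≠ θ' → ∑ x, v θ x * π θ' x ≤ ∑ x, v θ x * π θ x) ∧
    -- (ii) u_LP = u*
    sSup {s : ℝ | ∃ π : Θ → 𝒳 → ℝ,
        (∀ θ x, 0 ≤ π θ x) ∧ (∀ θ, ∑ x, π θ x = 1) ∧
        (∀ θ θ' : Θ, θ ≠ θ' → ∑ x, v θ x * π θ' x ≤ ∑ x, v θ x * π θ x) ∧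
        s = ∑ θ, f θ * ∑ x, u θ x * π θ x} =
      sSup {s : ℝ | ∃ (π : Θ → 𝒳 → ℝ) (r : Θ → Θ),
        (∀ θ x, 0 ≤ π θ x) ∧ (∀ θ, ∑ x, π θ x = 1) ∧
        (∀ θ θ'' : Θ, ∑ x, v θ x * π θ'' x ≤ ∑ x, v θ x * π (r θ) x) ∧
        s = ∑ θ, f θ * ∑ x, u θ x * π (r θ) x} :=
  ⟨exists_interior_ic_mechanism hnondeg (fun θ => funext (hvbar θ)) hdistinct hε hπbar1
      hinterior,
    congrArg sSup (ic_values_eq_best_response_values f u v)⟩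

/-- Lemma 2.1 (Revelation principle).  `Θ` is the type space, `𝒳` the principal's action
space, `f` the type distribution, `u`/`v` the principal's/agent's expected reward vectors.
Under the non-degeneracy assumption on the agent's rewards and the interior-point
assumption, (i) the incentive-compatible feasible set is nonempty and contains a mechanism
`π̂` together with a whole `δ`-neighbourhood (within the affine slice of row-sums one) of
incentive-compatible coordination mechanisms, and (ii) the LP value equals the OPT value. -/
theorem revelation_principle
    {Θ 𝒳 : Type*} [Fintype Θ] [Fintype 𝒳] [Nonempty Θ] [Nonempty 𝒳]
    (f : Θ → ℝ) (u v : Θ → 𝒳 → ℝ)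
    (hf0 : ∀ θ, 0 ≤ f θ) (hf1 : ∑ θ, f θ = 1)
    -- non-degenerate rewards: `v θ` is not a scalar multiple of the all-ones vector
    (hnondeg : ∀ θ, ¬∃ c : ℝ, v θ = fun _ => c)
    -- the normalized reward vectors, pairwise distinct
    (vbar : Θ → 𝒳 → ℝ)
    (hvbar : ∀ θ x, vbar θ x =
      (v θ x - (∑ y, v θ y) / (Fintype.card 𝒳 : ℝ)) /
        Real.sqrt (∑ y, (v θ y - (∑ z, v θ z) / (Fintype.card 𝒳 : ℝ)) ^ 2))
    (hdistinct : ∀ θ θ' : Θ, θ ≠ θ' → vbar θ ≠ vbar θ')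
    -- interior-point assumption
    (πbar : Θ → 𝒳 → ℝ) (ε : ℝ) (hε : 0 < ε)
    (hπbar0 : ∀ θ x, 0 ≤ πbar θ x) (hπbar1 : ∀ θ, ∑ x, πbar θ x = 1)
    (hinterior : ∀ π : Θ → 𝒳 → ℝ, (∀ θ, ∑ x, π θ x = 1) →
      Real.sqrt (∑ θ, ∑ x, (π θ x - πbar θ x) ^ 2) ≤ ε → ∀ θ x, 0 ≤ π θ x) :
    -- (i) feasibility with an interior point for the IC constraints
    (∃ (πhat : Θ → 𝒳 → ℝ) (δ : ℝ), 0 < δ ∧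
      (∀ θ x, 0 ≤ πhat θ x) ∧ (∀ θ, ∑ x, πhat θ x = 1) ∧
      (∀ θ θ' : Θ, θ ≠ θ' → ∑ x, v θ x * πhat θ' x ≤ ∑ x, v θ x * πhat θ x) ∧
      ∀ π : Θ → 𝒳 → ℝ, (∀ θ, ∑ x, π θ x = 1) →
        Real.sqrt (∑ θ, ∑ x, (π θ x - πhat θ x) ^ 2) ≤ δ →
          (∀ θ x, 0 ≤ π θ x) ∧
            ∀ θ θ' : Θ, θ ≠ θ' → ∑ x, v θ x * π θ' x ≤ ∑ x, v θ x * π θ x) ∧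
    -- (ii) u_LP = u*
    sSup {s : ℝ | ∃ π : Θ → 𝒳 → ℝ,
        (∀ θ x, 0 ≤ π θ x) ∧ (∀ θ, ∑ x, π θ x = 1) ∧
        (∀ θ θ' : Θ, θ ≠ θ' → ∑ x, v θ x * π θ' x ≤ ∑ x, v θ x * π θ x) ∧
        s = ∑ θ, f θ * ∑ x, u θ x * π θ x} =
      sSup {s : ℝ | ∃ (π : Θ → 𝒳 → ℝ) (r : Θ → Θ),
        (∀ θ x, 0 ≤ π θ x) ∧ (∀ θ, ∑ x, π θ x = 1) ∧
        (∀ θ θ'' : Θ, ∑ x, v θ x * π θ'' x ≤ ∑ x, v θ x * π (r θ) x) ∧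
        s = ∑ θ, f θ * ∑ x, u θ x * π (r θ) x} :=
  revelation_principle_general f u v hnondeg vbar hvbar hdistinct πbar ε hε hπbar1 hinterior
end

section
/- There exists ε > 0 such that, setting Π_θ := (1/d)·𝟙 + ε·v̄_θ for each θ ∈ Θ, every Π_θ has nonnegative entries whose sum equals 1, and for all θ, θ' ∈ Θ with θ ≠ θ' one has the strict incentive inequality ⟨v̄_θ, Π_θ⟩ > ⟨v̄_θ, Π_{θ'}⟩. (Strictly incentive-compatible mechanism construction from the proof of Lemma 2.1.) -/
/-- Strictly incentive-compatible mechanism construction from the proof of Lemma 2.1: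
if the normalized reward vectors `v̄_θ` are unit vectors orthogonal to the all-ones vector
and pairwise distinct, then for some `ε > 0` the rows `Π_θ = 𝟙/d + ε·v̄_θ` form a
coordination mechanism satisfying the strict incentive-compatibility constraints. -/
theorem strict_ic_mechanism {Θ : Type*} [Fintype Θ] [Nonempty Θ] (d : ℕ) (hd : 1 ≤ d)
    (vbar : Θ → Fin d → ℝ)
    (hnorm : ∀ θ, Real.sqrt (∑ i, (vbar θ i) ^ 2) = 1)
    (horth : ∀ θ, ∑ i, vbar θ i = 0)
    (hdistinct : ∀ θ θ' : Θ, θ ≠ θ' → vbar θ ≠ vbar θ') :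
    ∃ ε : ℝ, 0 < ε ∧
      (∀ θ i, 0 ≤ 1 / (d : ℝ) + ε * vbar θ i) ∧
      (∀ θ, ∑ i, (1 / (d : ℝ) + ε * vbar θ i) = 1) ∧
      ∀ θ θ' : Θ, θ ≠ θ' →
        ∑ i, vbar θ i * (1 / (d : ℝ) + ε * vbar θ' i) <
          ∑ i, vbar θ i * (1 / (d : ℝ) + ε * vbar θ i) := by
  have hd0 : (0:ℝ) < d := by exact_mod_cast Nat.lt_of_lt_of_le Nat.zero_lt_one hd
  -- sum of squares equals 1
  have hsq : ∀ θ, ∑ i, (vbar θ i) ^ 2 = 1 := by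
    intro θ
    have h := hnorm θ
    have hnn : (0:ℝ) ≤ ∑ i, (vbar θ i) ^ 2 :=
      Finset.sum_nonneg fun i _ => sq_nonneg _
    nlinarith [Real.sq_sqrt hnn]
  have habs : ∀ θ i, |vbar θ i| ≤ 1 := by
    intro θ i
    have h1 : (vbar θ i) ^ 2 ≤ 1 := by
      rw [← hsq θ]
      exact Finset.single_le_sum (f := fun j => (vbar θ j)^2) (fun j _ => sq_nonneg _) (Finset.mem_univ i)
    nlinarith [abs_nonneg (vbar θ i), sq_abs (vbar θ i)]
  refine ⟨1 / d, by positivity, ?_, ?_, ?_⟩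
  · intro θ i
    have := habs θ i
    have h2 : -(1:ℝ) ≤ vbar θ i := neg_le_of_abs_le this
    have h3 : (0:ℝ) < 1 / d := by positivity
    nlinarith
  · intro θ
    rw [Finset.sum_add_distrib, ← Finset.mul_sum, horth θ, Finset.sum_const]
    simp [Finset.card_univ]
    field_simp
  · intro θ θ' hne
    have key : ∑ i, vbar θ i * vbar θ' i < 1 := by
      have hpos : 0 < ∑ i, (vbar θ i - vbar θ' i) ^ 2 := by
        have hne' := hdistinct θ θ' hne
        rcases Function.ne_iff.mp hne' with ⟨i, hi⟩
        apply Finset.sum_pos' (fun j _ => sq_nonneg _)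
        refine ⟨i, Finset.mem_univ i, ?_⟩
        have h0 : vbar θ i - vbar θ' i ≠ 0 := sub_ne_zero.mpr hi
        positivity
      have hexp : ∑ i, (vbar θ i - vbar θ' i) ^ 2
          = (∑ i, (vbar θ i)^2) + (∑ i, (vbar θ' i)^2) - 2 * ∑ i, vbar θ i * vbar θ' i := by
        rw [← Finset.sum_add_distrib, Finset.mul_sum, ← Finset.sum_sub_distrib]
        apply Finset.sum_congr rfl; intros; ring
      rw [hexp, hsq θ, hsq θ'] at hpos
      linarith
    have expand : ∀ w : Fin d → ℝ,
        ∑ i, vbar θ i * (1 / (d : ℝ) + (1/d) * w i)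
          = (1/(d:ℝ)) * ∑ i, vbar θ i * w i := by
      intro w
      have h1 : ∑ i, vbar θ i * (1 / (d : ℝ) + (1/d) * w i)
          = (1/(d:ℝ)) * (∑ i, vbar θ i) + (1/(d:ℝ)) * ∑ i, vbar θ i * w i := by
        rw [Finset.mul_sum, Finset.mul_sum, ← Finset.sum_add_distrib]
        apply Finset.sum_congr rfl; intros; ring
      rw [h1, horth θ]; ring
    rw [expand, expand]
    apply mul_lt_mul_of_pos_left _ (by positivity)
    have h2 : ∑ i, vbar θ i * vbar θ i = 1 := by
      rw [← hsq θ]; apply Finset.sum_congr rfl; intros; ring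
    rw [h2]; exact key
end

section
/- For μ-almost every Q ∈ O(m), writing ζ_a := Q·w_a for each a: (i) every coordinate of every ζ_a is nonzero, i.e. (ζ_a)_i ≠ 0 for all a ∈ {1,…,K} and i ∈ {1,…,m}; and (ii) for all a ≠ b and every i ∈ {1,…,m−1}: ((ζ_b)_i)² · Σ_{j=i+1}^{m} ((ζ_a)_j)² ≠ ((ζ_a)_i)² · Σ_{j=i+1}^{m} ((ζ_b)_j)². (Lemma 3.2, in the coordinate form established in its proof: a uniformly random rotation puts the normalized reward vectors in generic position.) -/
/-!
Left invariance lets us replace `Q` by `G_t * Q`, where `G_t` is the rotation by a uniformly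
random angle `t` in a coordinate plane; by Fubini, `μ E ≤ μ E'` as soon as, for every `Q ∉ E'`,
only countably many `t` put `G_t * Q` into `E`. Along such a rotation the polynomial conditions
defining the bad events become trigonometric polynomials in `t`, which vanish only countably often
unless all their coefficients do.

For (i), rotating in the plane `(p, k)` shows that `(Q w)_p = 0` almost surely forces
`(Q w)_k = 0`; iterating over `k` leads to `Q w = 0`, which is impossible. The same iteration works
for any vector depending equivariantly on `Q`.

For (ii), with `x = Q w_a` and `y = Q w_b`, the equation reads `y_i² S_x = x_i² S_y`, where `S`
sums the squares over `j ≥ i`. These sums are invariant under rotations in the plane `(i, i + 1)`,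
along which the equation survives for uncountably many angles only if `x_i y_{i+1} = x_{i+1} y_i`.
That is a coordinate of `x_i y - y_i x`, which is equivariant under rotations fixing the `i`-th
axis, so almost surely `x_i y = y_i x`; this forces `w_b = ±w_a` unless `x_i = 0`.
-/

open MeasureTheory

/-- Matrices over `ℝ` carry the (Borel) product measurable structure. -/
instance (m : ℕ) : MeasurableSpace (Matrix (Fin m) (Fin m) ℝ) :=
  inferInstanceAs (MeasurableSpace (Fin m → Fin m → ℝ))

open Real Set Filter Matrix

instance (m : ℕ) : BorelSpace (Matrix (Fin m) (Fin m) ℝ) :=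
  inferInstanceAs (BorelSpace (Fin m → Fin m → ℝ))

theorem countable_setOf_eq_zero_of_analyticOnNhd {f : ℝ → ℝ} (hf : AnalyticOnNhd ℝ f univ)
    {t₀ : ℝ} (ht₀ : f t₀ ≠ 0) : {t | f t = 0}.Countable := by
  rcases hf.eqOn_zero_or_eventually_ne_zero_of_preconnected isPreconnected_univ with h | h
  · exact absurd (h (mem_univ t₀)) ht₀
  · simpa using (HereditarilyLindelofSpace.isLindelof _).countable_of_isDiscrete
      (isDiscrete_of_codiscreteWithin (s := {t | f t = 0}) h)

theorem countable_setOf_linear_trig_eq_zero {a b : ℝ} (h : a ≠ 0 ∨ b ≠ 0) :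
    {t | a * cos t + b * sin t = 0}.Countable := by
  refine countable_setOf_eq_zero_of_analyticOnNhd (fun _ _ => by fun_prop)
    (t₀ := if a = 0 then π / 2 else 0) ?_
  split_ifs with ha <;> simp_all

theorem countable_setOf_quadratic_trig_eq_zero {a b c : ℝ} (h : a ≠ 0 ∨ b ≠ 0 ∨ c ≠ 0) :
    {t | a * cos t ^ 2 + b * (cos t * sin t) + c * sin t ^ 2 = 0}.Countable := by
  by_cases ha : a = 0
  · by_cases hc : c = 0
    · refine countable_setOf_eq_zero_of_analyticOnNhd (fun _ _ => by fun_prop) (t₀ := π / 4) ?_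
      simp_all [cos_pi_div_four, sin_pi_div_four]
    · exact countable_setOf_eq_zero_of_analyticOnNhd (fun _ _ => by fun_prop) (t₀ := π / 2)
        (by simpa using hc)
  · exact countable_setOf_eq_zero_of_analyticOnNhd (fun _ _ => by fun_prop) (t₀ := 0)
      (by simpa using ha)

theorem measure_le_of_null_fibers {G α : Type*} [Mul G] [MeasurableSpace G] [MeasurableSpace α]
    {μ : Measure G} [SFinite μ] (hμ : ∀ g, MeasurePreserving (g * ·) μ μ)
    (ν : Measure α) [IsProbabilityMeasure ν] {γ : α → G}
    (hγ : Measurable fun x : α × G => γ x.1 * x.2) {E E' : Set G}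
    (hE : MeasurableSet E) (hE' : MeasurableSet E') (hfib : ∀ g ∉ E', ν {t | γ t * g ∈ E} = 0) :
    μ E ≤ μ E' := by
  have hS : MeasurableSet {x : α × G | γ x.1 * x.2 ∈ E} := hγ hE
  calc μ E = ∫⁻ t, μ ((γ t * ·) ⁻¹' E) ∂ν := by
        simp [(hμ _).measure_preimage hE.nullMeasurableSet]
    _ = ν.prod μ {x : α × G | γ x.1 * x.2 ∈ E} := (Measure.prod_apply hS).symm
    _ = ∫⁻ g, ν {t | γ t * g ∈ E} ∂μ := Measure.prod_apply_symm hS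
    _ ≤ ∫⁻ g, E'.indicator 1 g ∂μ := lintegral_mono fun g => by
        by_cases hg : g ∈ E'
        · simpa [hg] using prob_le_one
        · simp [hg, hfib g hg]
    _ = μ E' := lintegral_indicator_one hE'

theorem Finset.le_of_forall_le_insert {α β : Type*} [DecidableEq α] [Preorder β]
    (f : Finset α → β) {s t : Finset α} (hst : s ⊆ t)
    (h : ∀ u, s ⊆ u → u ⊆ t → ∀ k ∈ t, k ∉ u → f u ≤ f (insert k u)) : f s ≤ f t := by
  suffices ∀ d ⊆ t \ s, f s ≤ f (s ∪ d) by
    simpa [Finset.union_sdiff_of_subset hst] using this (t \ s) subset_rfl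
  intro d hd
  induction d using Finset.induction_on with
  | empty => simp
  | insert k d hkd ih =>
    have hk := hd (mem_insert_self k d)
    have hdt := (insert_subset_iff.1 hd).2
    rw [union_insert]
    refine (ih hdt).trans (h _ subset_union_left (union_subset hst ?_) k (mem_sdiff.1 hk).1 ?_)
    · exact hdt.trans sdiff_subset
    · simp [(mem_sdiff.1 hk).2, hkd]

theorem eq_or_eq_neg_of_smul_eq_smul {n R : Type*} [Fintype n] [Field R] [LinearOrder R]
    [IsStrictOrderedRing R] {v w : n → R} {a b : R} (ha : a ≠ 0) (h : a • w = b • v)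
    (hvw : v ⬝ᵥ v = w ⬝ᵥ w) : w = v ∨ w = -v := by
  have hw : w = (b / a) • v := by rw [div_eq_inv_mul, mul_smul, ← h, inv_smul_smul₀ ha]
  by_cases hv : v = 0
  · exact Or.inl (by rw [hw, hv, smul_zero])
  have hvv : v ⬝ᵥ v ≠ 0 := mt dotProduct_self_eq_zero.1 hv
  rw [hw, smul_dotProduct, dotProduct_smul, smul_eq_mul, smul_eq_mul, ← mul_assoc] at hvw
  have hsq : b / a * (b / a) = 1 := mul_right_cancel₀ hvv (by rw [one_mul]; exact hvw.symm)
  rcases mul_self_eq_one_iff.1 hsq with h1 | h1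
  · exact Or.inl (by rw [hw, h1, one_smul])
  · exact Or.inr (by rw [hw, h1, neg_one_smul])

section Givens

variable {m : ℕ} {a b : Fin m}

/-- Rotation by `t` in the `(a, b)`-plane, taking `e_a` to `cos t • e_a + sin t • e_b`; for `a = b`
it is not orthogonal. -/
noncomputable def givens (a b : Fin m) (t : ℝ) : Matrix (Fin m) (Fin m) ℝ :=
  1 + (cos t - 1) • (single a a 1 + single b b 1) + sin t • (single b a 1 - single a b 1)

theorem givens_mulVec_apply_left (hab : a ≠ b) (t : ℝ) (z : Fin m → ℝ) :
    (givens a b t *ᵥ z) a = cos t * z a - sin t * z b := by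
  simp only [givens, add_mulVec, sub_mulVec, smul_mulVec, one_mulVec, single_mulVec, Pi.add_apply,
    Pi.sub_apply, Pi.smul_apply, Function.update_self, Function.update_of_ne hab,
    Pi.zero_apply, smul_eq_mul]
  ring

theorem givens_mulVec_apply_right (hab : a ≠ b) (t : ℝ) (z : Fin m → ℝ) :
    (givens a b t *ᵥ z) b = sin t * z a + cos t * z b := by
  simp only [givens, add_mulVec, sub_mulVec, smul_mulVec, one_mulVec, single_mulVec, Pi.add_apply,
    Pi.sub_apply, Pi.smul_apply, Function.update_self, Function.update_of_ne hab.symm,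
    Pi.zero_apply, smul_eq_mul]
  ring

theorem givens_mulVec_apply_of_ne {p : Fin m} (hpa : p ≠ a) (hpb : p ≠ b) (t : ℝ)
    (z : Fin m → ℝ) : (givens a b t *ᵥ z) p = z p := by
  simp only [givens, add_mulVec, sub_mulVec, smul_mulVec, one_mulVec, single_mulVec, Pi.add_apply,
    Pi.sub_apply, Pi.smul_apply, Function.update_of_ne hpa, Function.update_of_ne hpb,
    Pi.zero_apply, smul_eq_mul]
  ring

theorem transpose_givens (a b : Fin m) (t : ℝ) : (givens a b t)ᵀ = givens a b (-t) := by
  simp only [givens, transpose_add, transpose_smul, transpose_sub, transpose_one,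
    transpose_single, cos_neg, sin_neg]
  module

theorem givens_neg_mulVec_givens_mulVec (hab : a ≠ b) (t : ℝ) (z : Fin m → ℝ) :
    givens a b (-t) *ᵥ (givens a b t *ᵥ z) = z := by
  ext p
  have hpyth := cos_sq_add_sin_sq t
  by_cases hpa : p = a
  · subst hpa
    simp only [givens_mulVec_apply_left hab, givens_mulVec_apply_right hab, cos_neg, sin_neg]
    linear_combination z p * hpyth
  by_cases hpb : p = b
  · subst hpb
    simp only [givens_mulVec_apply_left hab, givens_mulVec_apply_right hab, cos_neg, sin_neg]
    linear_combination z p * hpyth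
  simp only [givens_mulVec_apply_of_ne hpa hpb]

theorem givens_mem_orthogonalGroup (hab : a ≠ b) (t : ℝ) :
    givens a b t ∈ orthogonalGroup (Fin m) ℝ := by
  rw [mem_orthogonalGroup_iff', transpose_givens]
  exact ext_of_mulVec_single fun q => by
    rw [← mulVec_mulVec, givens_neg_mulVec_givens_mulVec hab, one_mulVec]

theorem continuous_givens (a b : Fin m) : Continuous (givens a b) := by
  unfold givens
  fun_prop

theorem sum_sq_givens_mulVec (hab : a ≠ b) (t : ℝ) (z : Fin m → ℝ) {s : Finset (Fin m)}
    (ha : a ∈ s) (hb : b ∈ s) : ∑ j ∈ s, (givens a b t *ᵥ z) j ^ 2 = ∑ j ∈ s, z j ^ 2 := by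
  have hb' : b ∈ s.erase a := Finset.mem_erase.2 ⟨hab.symm, hb⟩
  rw [← Finset.add_sum_erase s _ ha, ← Finset.add_sum_erase _ _ hb',
    ← Finset.add_sum_erase s (fun j => z j ^ 2) ha, ← Finset.add_sum_erase _ (fun j => z j ^ 2) hb',
    givens_mulVec_apply_left hab, givens_mulVec_apply_right hab]
  have hrest : ∑ j ∈ (s.erase a).erase b, (givens a b t *ᵥ z) j ^ 2 =
      ∑ j ∈ (s.erase a).erase b, z j ^ 2 :=
    Finset.sum_congr rfl fun j hj => by
      rw [givens_mulVec_apply_of_ne (Finset.ne_of_mem_erase (Finset.mem_of_mem_erase hj))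
        (Finset.ne_of_mem_erase hj)]
  rw [hrest]
  linear_combination (z a ^ 2 + z b ^ 2) * cos_sq_add_sin_sq t

noncomputable def givensRotation (hab : a ≠ b) (t : ℝ) : orthogonalGroup (Fin m) ℝ :=
  ⟨givens a b t, givens_mem_orthogonalGroup hab t⟩

theorem givensRotation_mul_mulVec (hab : a ≠ b) (t : ℝ) (Q : orthogonalGroup (Fin m) ℝ)
    (w : Fin m → ℝ) : (givensRotation hab t * Q).1 *ᵥ w = givens a b t *ᵥ (Q.1 *ᵥ w) :=
  (mulVec_mulVec _ _ _).symm

theorem countable_setOf_givens_mulVec_tail_eq {i i' : Fin m} (hii' : i ≠ i')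
    {s : Finset (Fin m)} (hi : i ∉ s) (hi' : i' ∈ s) {x y : Fin m → ℝ}
    (hxy : x i * y i' - y i * x i' ≠ 0) :
    {t | (givens i i' t *ᵥ y) i ^ 2 * ∑ j ∈ s, (givens i i' t *ᵥ x) j ^ 2 =
      (givens i i' t *ᵥ x) i ^ 2 * ∑ j ∈ s, (givens i i' t *ᵥ y) j ^ 2}.Countable := by
  -- Both sums extended to `insert i s` are invariant under the rotation.
  have htail : ∀ (z : Fin m → ℝ) (t : ℝ), ∑ j ∈ s, (givens i i' t *ᵥ z) j ^ 2 =
      ∑ j ∈ insert i s, z j ^ 2 - (givens i i' t *ᵥ z) i ^ 2 := fun z t => by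
    rw [← sum_sq_givens_mulVec hii' t z (Finset.mem_insert_self i s)
      (Finset.mem_insert_of_mem hi'), Finset.sum_insert hi]
    ring
  set Sx := ∑ j ∈ insert i s, x j ^ 2
  set Sy := ∑ j ∈ insert i s, y j ^ 2
  have hcoef : Sx * y i ^ 2 - Sy * x i ^ 2 ≠ 0 ∨ -2 * (Sx * y i * y i' - Sy * x i * x i') ≠ 0 ∨
      Sx * y i' ^ 2 - Sy * x i' ^ 2 ≠ 0 := by
    by_contra! h
    obtain ⟨h₁, h₂, h₃⟩ := h
    have hx : x i ≠ 0 ∨ x i' ≠ 0 := by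
      by_contra! h
      simp [h.1, h.2] at hxy
    have hSx : 0 < Sx := by
      refine (show 0 < x i ^ 2 + x i' ^ 2 by rcases hx with h | h <;> positivity).trans_le ?_
      simp only [Sx, Finset.sum_insert hi]
      gcongr
      exact Finset.single_le_sum (fun j _ => sq_nonneg (x j)) hi'
    have hzero : Sx * (x i * y i' - y i * x i') ^ 2 = 0 := by
      linear_combination x i ^ 2 * h₃ + x i * x i' * h₂ + x i' ^ 2 * h₁
    exact hxy (pow_eq_zero_iff two_ne_zero |>.1 ((mul_eq_zero.1 hzero).resolve_left hSx.ne'))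
  refine (countable_setOf_quadratic_trig_eq_zero hcoef).mono fun t ht => ?_
  simp only [mem_ofPred_eq, htail, givens_mulVec_apply_left hii'] at ht ⊢
  linear_combination ht

end Givens

section RandomRotation

variable {m : ℕ} {μ : Measure (orthogonalGroup (Fin m) ℝ)} [SFinite μ]

theorem measure_le_of_countable_givens_fibers (hμ : ∀ g, MeasurePreserving (g * ·) μ μ)
    {a b : Fin m} (hab : a ≠ b) {E E' : Set (orthogonalGroup (Fin m) ℝ)}
    (hE : MeasurableSet E) (hE' : MeasurableSet E')
    (hfib : ∀ Q ∉ E', {t | givensRotation hab t * Q ∈ E}.Countable) : μ E ≤ μ E' := by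
  have : IsProbabilityMeasure (volume.restrict (Ioc (0 : ℝ) 1)) := ⟨by simp⟩
  refine measure_le_of_null_fibers hμ (volume.restrict (Ioc (0 : ℝ) 1)) ?_ hE hE'
    fun Q hQ => (hfib Q hQ).measure_zero _
  exact Continuous.measurable <|
    (((continuous_givens a b).comp continuous_fst).subtype_mk _).mul continuous_snd

theorem measure_setOf_apply_eq_zero_le_of_equivariant (hμ : ∀ g, MeasurePreserving (g * ·) μ μ)
    {U : Finset (Fin m)} {v : orthogonalGroup (Fin m) ℝ → Fin m → ℝ}
    (hv : ∀ p, Measurable fun Q => v Q p)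
    (hequiv : ∀ a ∈ U, ∀ b ∈ U, ∀ (hab : a ≠ b) (t : ℝ) (Q : orthogonalGroup (Fin m) ℝ),
      v (givensRotation hab t * Q) = givens a b t *ᵥ v Q)
    {a : Fin m} (ha : a ∈ U) : μ {Q | v Q a = 0} ≤ μ {Q | ∀ p ∈ U, v Q p = 0} := by
  set D : Finset (Fin m) → Set (orthogonalGroup (Fin m) ℝ) := fun s => {Q | ∀ p ∈ s, v Q p = 0}
  have hD : ∀ s, MeasurableSet (D s) := fun s => by
    simp only [D, ofPred_forall]
    exact Finset.measurableSet_biInter s fun p _ => measurableSet_eq_fun (hv p) measurable_const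
  have hDa : {Q | v Q a = 0} = D {a} := by simp [D]
  rw [hDa]
  refine Finset.le_of_forall_le_insert (fun s => μ (D s)) (Finset.singleton_subset_iff.2 ha)
    fun u hau huU k hkU hku => ?_
  have hau : a ∈ u := Finset.singleton_subset_iff.1 hau
  have hak : a ≠ k := fun h => hku (h ▸ hau)
  refine measure_le_of_countable_givens_fibers hμ hak (hD u) (hD _) fun Q hQ => ?_
  by_cases h0 : v Q a = 0 ∧ v Q k = 0
  · -- The nonzero coordinate lies outside the plane `(a, k)`, so no rotation moves it.
    obtain ⟨p, hp, hvp⟩ : ∃ p ∈ insert k u, v Q p ≠ 0 := by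
      by_contra! h
      exact hQ h
    have hpa : p ≠ a := fun h => hvp (h ▸ h0.1)
    have hpk : p ≠ k := fun h => hvp (h ▸ h0.2)
    refine countable_empty.mono fun t ht => hvp ?_
    have := ht p ((Finset.mem_insert.1 hp).resolve_left hpk)
    rwa [hequiv a (huU hau) k hkU hak, givens_mulVec_apply_of_ne hpa hpk] at this
  · refine (countable_setOf_linear_trig_eq_zero (a := v Q a) (b := -v Q k)
      (by rw [neg_ne_zero]; tauto)).mono fun t ht => ?_
    have := ht a hau
    rw [hequiv a (huU hau) k hkU hak, givens_mulVec_apply_left hak] at this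
    show v Q a * cos t + -v Q k * sin t = 0
    linarith

theorem ae_mulVec_apply_ne_zero (hμ : ∀ g, MeasurePreserving (g * ·) μ μ)
    {w : Fin m → ℝ} (hw : w ≠ 0) (p : Fin m) : ∀ᵐ Q ∂μ, (Q.1 *ᵥ w) p ≠ 0 := by
  have hempty : {Q : orthogonalGroup (Fin m) ℝ | ∀ q ∈ Finset.univ, (Q.1 *ᵥ w) q = 0} = ∅ :=
    eq_empty_of_forall_notMem fun Q hQ => hw <| mulVec_injective_of_isUnit Unitary.isUnit_coe <| by
      rw [mulVec_zero]
      exact funext fun q => hQ q (Finset.mem_univ q)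
  have hle := measure_setOf_apply_eq_zero_le_of_equivariant hμ (v := fun Q => Q.1 *ᵥ w)
    (fun _ => by fun_prop)
    (fun _ _ _ _ hab t Q => givensRotation_mul_mulVec hab t Q w) (Finset.mem_univ p)
  rw [hempty, measure_empty, nonpos_iff_eq_zero] at hle
  simpa [ae_iff] using hle

theorem measure_setOf_tail_eq_le (hμ : ∀ g, MeasurePreserving (g * ·) μ μ)
    (w₁ w₂ : Fin m → ℝ) {i : Fin m} (hi : (i : ℕ) + 1 < m) :
    μ {Q | (Q.1 *ᵥ w₂) i ^ 2 * ∑ j ∈ Finset.univ.filter (fun j : Fin m => i < j),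
        (Q.1 *ᵥ w₁) j ^ 2 =
      (Q.1 *ᵥ w₁) i ^ 2 * ∑ j ∈ Finset.univ.filter (fun j : Fin m => i < j),
        (Q.1 *ᵥ w₂) j ^ 2} ≤
    μ {Q | (Q.1 *ᵥ w₁) i * (Q.1 *ᵥ w₂) ⟨i + 1, hi⟩ -
      (Q.1 *ᵥ w₂) i * (Q.1 *ᵥ w₁) ⟨i + 1, hi⟩ = 0} := by
  have hii' : i ≠ ⟨i + 1, hi⟩ := by simp [Fin.ext_iff]
  refine measure_le_of_countable_givens_fibers hμ hii'
    (isClosed_eq (by fun_prop) (by fun_prop)).measurableSet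
    (isClosed_eq (by fun_prop) (by fun_prop)).measurableSet fun Q hQ => ?_
  simpa only [mem_ofPred_eq, givensRotation_mul_mulVec] using
    countable_setOf_givens_mulVec_tail_eq hii' (s := Finset.univ.filter (fun j : Fin m => i < j))
      (by simp) (Finset.mem_filter.2 ⟨Finset.mem_univ _, Fin.lt_def.2 (Nat.lt_succ_self _)⟩) hQ

theorem ae_sq_mul_sum_sq_ne (hμ : ∀ g, MeasurePreserving (g * ·) μ μ) {w₁ w₂ : Fin m → ℝ}
    (hnorm : w₁ ⬝ᵥ w₁ = w₂ ⬝ᵥ w₂) (hne : w₁ ≠ w₂) (hne' : w₁ ≠ -w₂) {i : Fin m}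
    (hi : (i : ℕ) + 1 < m) :
    ∀ᵐ Q ∂μ, (Q.1 *ᵥ w₂) i ^ 2 * ∑ j ∈ Finset.univ.filter (fun j : Fin m => i < j),
        (Q.1 *ᵥ w₁) j ^ 2 ≠
      (Q.1 *ᵥ w₁) i ^ 2 * ∑ j ∈ Finset.univ.filter (fun j : Fin m => i < j),
        (Q.1 *ᵥ w₂) j ^ 2 := by
  set v : orthogonalGroup (Fin m) ℝ → Fin m → ℝ :=
    fun Q => (Q.1 *ᵥ w₁) i • (Q.1 *ᵥ w₂) - (Q.1 *ᵥ w₂) i • (Q.1 *ᵥ w₁)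
  have hequiv : ∀ a ∈ Finset.univ.erase i, ∀ b ∈ Finset.univ.erase i, ∀ (hab : a ≠ b) (t : ℝ)
      (Q : orthogonalGroup (Fin m) ℝ), v (givensRotation hab t * Q) = givens a b t *ᵥ v Q := by
    intro a ha b hb hab t Q
    have hia := (Finset.ne_of_mem_erase ha).symm
    have hib := (Finset.ne_of_mem_erase hb).symm
    simp only [v, givensRotation_mul_mulVec, givens_mulVec_apply_of_ne hia hib, mulVec_sub,
      mulVec_smul]
  have hw₁ : w₁ ≠ 0 := by
    rintro rfl
    exact hne (dotProduct_self_eq_zero.1 (by simpa using hnorm.symm)).symm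
  have hparallel : {Q | ∀ p ∈ Finset.univ.erase i, v Q p = 0} ⊆ {Q | (Q.1 *ᵥ w₁) i = 0} := by
    intro Q hQ
    by_contra hxi
    have hv : v Q = 0 := funext fun p => by
      by_cases hp : p = i
      · simp only [v, hp, Pi.sub_apply, Pi.smul_apply, smul_eq_mul, Pi.zero_apply]
        ring
      · exact hQ p (Finset.mem_erase.2 ⟨hp, Finset.mem_univ p⟩)
    have hsmul : (Q.1 *ᵥ w₁) i • w₂ = (Q.1 *ᵥ w₂) i • w₁ :=
      sub_eq_zero.1 <| mulVec_injective_of_isUnit Unitary.isUnit_coe <| by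
        rw [mulVec_sub, mulVec_smul, mulVec_smul, mulVec_zero]
        exact hv
    rcases eq_or_eq_neg_of_smul_eq_smul hxi hsmul hnorm with h | h
    · exact hne h.symm
    · exact hne' (by rw [h, neg_neg])
  simp only [ae_iff, ne_eq, not_not]
  refine nonpos_iff_eq_zero.1 ?_
  calc _ ≤ μ {Q | v Q ⟨i + 1, hi⟩ = 0} := measure_setOf_tail_eq_le hμ w₁ w₂ hi
    _ ≤ μ {Q | ∀ p ∈ Finset.univ.erase i, v Q p = 0} :=
      measure_setOf_apply_eq_zero_le_of_equivariant hμ (fun _ => by fun_prop) hequiv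
        (by simp [Fin.ext_iff])
    _ ≤ μ {Q | (Q.1 *ᵥ w₁) i = 0} := measure_mono hparallel
    _ = 0 := by simpa [ae_iff] using ae_mulVec_apply_ne_zero hμ hw₁ i

end RandomRotation

theorem generic_position_of_random_rotation_general
    (m : ℕ) (K : ℕ)
    (w : Fin K → Fin m → ℝ)
    (hunit : ∀ a, Real.sqrt (∑ i, (w a i) ^ 2) = 1)
    (hpair : ∀ a b : Fin K, a ≠ b → w a ≠ w b ∧ w a ≠ -w b)
    (μ : Measure (Matrix.orthogonalGroup (Fin m) ℝ))
    [IsProbabilityMeasure μ]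
    (hinv : ∀ Q : Matrix.orthogonalGroup (Fin m) ℝ,
      MeasurePreserving (fun R => Q * R) μ μ) :
    ∀ᵐ (Q : Matrix.orthogonalGroup (Fin m) ℝ) ∂μ,
      (∀ (a : Fin K) (i : Fin m), (Q : Matrix (Fin m) (Fin m) ℝ).mulVec (w a) i ≠ 0) ∧
      (∀ a b : Fin K, a ≠ b → ∀ i : Fin m, (i : ℕ) + 1 < m →
        ((Q : Matrix (Fin m) (Fin m) ℝ).mulVec (w b) i) ^ 2 *
            ∑ j ∈ Finset.univ.filter (fun j : Fin m => i < j),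
              ((Q : Matrix (Fin m) (Fin m) ℝ).mulVec (w a) j) ^ 2 ≠
          ((Q : Matrix (Fin m) (Fin m) ℝ).mulVec (w a) i) ^ 2 *
            ∑ j ∈ Finset.univ.filter (fun j : Fin m => i < j),
              ((Q : Matrix (Fin m) (Fin m) ℝ).mulVec (w b) j) ^ 2) := by
  have hw : ∀ a, w a ⬝ᵥ w a = 1 := fun a => by
    simpa [dotProduct, sq] using Real.sqrt_eq_one.1 (hunit a)
  have hw₀ : ∀ a, w a ≠ 0 := fun a h => by simpa [h] using hw a
  simp only [eventually_and, ae_all_iff, eventually_imp_distrib_left]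
  exact ⟨fun a i => ae_mulVec_apply_ne_zero hinv (hw₀ a) i, fun a b hab i hi =>
    ae_sq_mul_sum_sq_ne hinv ((hw a).trans (hw b).symm) (hpair a b hab).1 (hpair a b hab).2 hi⟩

/-- Lemma 3.2 (coordinate form): if `w₁, …, w_K` are unit vectors in `ℝ^m` that are pairwise
neither equal nor antipodal, and `μ` is the Haar probability measure on the orthogonal group
`O(m)` (a left-translation-invariant probability measure), then for `μ`-almost every `Q`,
writing `ζ_a = Q·w_a`: (i) all coordinates of every `ζ_a` are nonzero, and (ii) for all
`a ≠ b` and every non-final coordinate `i`,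
`(ζ_b)_i² · Σ_{j>i} (ζ_a)_j² ≠ (ζ_a)_i² · Σ_{j>i} (ζ_b)_j²`. -/
theorem generic_position_of_random_rotation
    (m : ℕ) (hm : 2 ≤ m) (K : ℕ) (hK : 1 ≤ K)
    (w : Fin K → Fin m → ℝ)
    (hunit : ∀ a, Real.sqrt (∑ i, (w a i) ^ 2) = 1)
    (hpair : ∀ a b : Fin K, a ≠ b → w a ≠ w b ∧ w a ≠ -w b)
    (μ : Measure (Matrix.orthogonalGroup (Fin m) ℝ))
    [IsProbabilityMeasure μ]
    (hinv : ∀ Q : Matrix.orthogonalGroup (Fin m) ℝ,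
      MeasurePreserving (fun R => Q * R) μ μ) :
    ∀ᵐ (Q : Matrix.orthogonalGroup (Fin m) ℝ) ∂μ,
      (∀ (a : Fin K) (i : Fin m), (Q : Matrix (Fin m) (Fin m) ℝ).mulVec (w a) i ≠ 0) ∧
      (∀ a b : Fin K, a ≠ b → ∀ i : Fin m, (i : ℕ) + 1 < m →
        ((Q : Matrix (Fin m) (Fin m) ℝ).mulVec (w b) i) ^ 2 *
            ∑ j ∈ Finset.univ.filter (fun j : Fin m => i < j),
              ((Q : Matrix (Fin m) (Fin m) ℝ).mulVec (w a) j) ^ 2 ≠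
          ((Q : Matrix (Fin m) (Fin m) ℝ).mulVec (w a) i) ^ 2 *
            ∑ j ∈ Finset.univ.filter (fun j : Fin m => i < j),
              ((Q : Matrix (Fin m) (Fin m) ℝ).mulVec (w b) j) ^ 2) :=
  generic_position_of_random_rotation_general m K w hunit hpair μ hinv
end

section
/- For every i ∈ {1,…,m−1}, the probability that (ζ'_i)² · Σ_{j=i+1}^{m} (ζ_j)² = (ζ_i)² · Σ_{j=i+1}^{m} (ζ'_j)² is zero. (Key null-set claim in the proof of Lemma 3.2.) -/
/-!
Write `n = ‖x‖²` and `v = n y - ⟨x, y⟩ x`, so that `ζ' = a x / √n + √(1 - a²) v / ‖v‖`.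
The event says that the quadratic form `B(z) = z_i² ∑_{j>i} x_j² - x_i² ∑_{j>i} z_j²` vanishes
at `ζ'`. Since `B(x) = 0`, expanding `B(ζ')` and squaring away the square roots shows that on the
event the quartic `4 a² ‖v‖² B(x, v)² - (1 - a²) n B(v)²` vanishes. For fixed `x` this is a
homogeneous polynomial in `y`, so its restriction to a line `y + t e_i` is a polynomial in `t`
whose `t⁴`-coefficient is its value at `e_i`, namely `n³ (∑_{j>i} x_j²)² (a² n² - (n - 2 x_i²)²)`.
This is nonzero for almost every `x` (again the zero set of a nonzero homogeneous polynomial),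
and then every such line meets the event in finitely many points. Fubini, first in the
coordinate `y_i` and then in `x`, shows that the event is null.
-/

open MeasureTheory ProbabilityTheory

/-- Normalize a vector in `ℝ^m` to unit Euclidean length. -/
noncomputable def unitize (m : ℕ) (x : Fin m → ℝ) : Fin m → ℝ :=
  fun j => x j / Real.sqrt (∑ l, (x l) ^ 2)

/-- The vector `ζ' = a·x̃ + √(1−a²)·(y − ⟨x̃,y⟩·x̃)/‖y − ⟨x̃,y⟩·x̃‖₂`, where `x̃ = x/‖x‖₂`. -/
noncomputable def zetaPrime (m : ℕ) (a : ℝ) (x y : Fin m → ℝ) : Fin m → ℝ :=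
  fun j =>
    a * unitize m x j +
      Real.sqrt (1 - a ^ 2) *
        unitize m (fun l => y l - (∑ l', unitize m x l' * y l') * unitize m x l) j

theorem MeasureTheory.Measure.pi_eq_zero_of_forall_update {ι : Type*} [Fintype ι]
    [DecidableEq ι] {X : ι → Type*} [∀ i, MeasurableSpace (X i)] (μ : ∀ i, Measure (X i))
    [∀ i, SigmaFinite (μ i)] (k : ι) {E : Set (∀ i, X i)} (hE : MeasurableSet E)
    (h : ∀ x, μ k (Function.update x k ⁻¹' E) = 0) : Measure.pi μ E = 0 := by
  rcases E.eq_empty_or_nonempty with rfl | ⟨x₀, -⟩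
  · exact measure_empty
  have hslice : ∀ x, ∫⁻ t, E.indicator 1 (Function.update x k t) ∂μ k = 0 := fun x => by
    simpa [← Set.indicator_comp_right, lintegral_indicator_one (measurable_update x hE)] using h x
  rw [← lintegral_indicator_one hE, lintegral_eq_lmarginal_univ x₀,
    lmarginal_erase' _ (measurable_one.indicator hE) (Finset.mem_univ k)]
  simp [hslice, lmarginal]

namespace MvPolynomial

variable {ι : Type*}

theorem isHomogeneous_ofNat {R : Type*} [CommSemiring R] (n : ℕ) [n.AtLeastTwo] :
    (OfNat.ofNat n : MvPolynomial ι R).IsHomogeneous 0 := by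
  simpa only [map_ofNat] using isHomogeneous_C ι (OfNat.ofNat n : R)

theorem IsHomogeneous.eval_smul {R : Type*} [CommSemiring R] {p : MvPolynomial ι R} {d : ℕ}
    (hp : p.IsHomogeneous d) (t : R) (x : ι → R) : eval (t • x) p = t ^ d * eval x p := by
  simp only [eval_eq, Finset.mul_sum, Pi.smul_apply, smul_eq_mul, mul_pow,
    Finset.prod_mul_distrib, Finset.prod_pow_eq_pow_sum]
  refine Finset.sum_congr rfl fun e he => ?_
  rw [← hp.degree_eq_sum_deg_support he]
  ring

theorem IsHomogeneous.finite_setOf_eval_add_smul_eq_zero {K : Type*} [Field K]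
    {p : MvPolynomial ι K} {d : ℕ} (hp : p.IsHomogeneous d) (v : ι → K) {β : ι → K}
    (hβ : eval β p ≠ 0) : {t : K | eval (v + t • β) p = 0}.Finite := by
  -- `q(s) = p(s • v + β)` is the reversal of `t ↦ p(v + t • β)`, and `q(0) = p(β) ≠ 0`
  set q : Polynomial K :=
    MvPolynomial.aeval (fun j => Polynomial.C (v j) * Polynomial.X + Polynomial.C (β j)) p
  have hq : ∀ s, q.eval s = eval (s • v + β) p := by
    intro s
    have hline : (fun j => Polynomial.aeval s (Polynomial.C (v j) * Polynomial.X +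
        Polynomial.C (β j))) = s • v + β := by
      ext j
      simp only [map_add, map_mul, Polynomial.aeval_C, Polynomial.aeval_X, Pi.add_apply,
        Pi.smul_apply, smul_eq_mul, Algebra.algebraMap_self, RingHom.id_apply, mul_comm]
    rw [← Polynomial.coe_aeval_eq_eval, ← AlgHom.comp_apply, comp_aeval, hline]
    rfl
  have hq0 : q ≠ 0 := fun h => hβ (by simpa [h] using (hq 0).symm)
  refine ((Set.finite_singleton 0).union
    ((q.finite_setOfPred_isRoot hq0).image Inv.inv)).subset fun t ht => ?_
  by_cases h0 : t = 0
  · exact Or.inl h0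
  refine Or.inr ⟨t⁻¹, ?_, inv_inv t⟩
  have hsmul : v + t • β = t • (t⁻¹ • v + β) := by rw [smul_add, smul_inv_smul₀ h0]
  replace ht : eval (v + t • β) p = 0 := ht
  rw [hsmul, hp.eval_smul, ← hq] at ht
  exact (mul_eq_zero.mp ht).resolve_left (pow_ne_zero _ h0)

theorem IsHomogeneous.pi_setOf_eval_eq_zero [Fintype ι] [DecidableEq ι]
    {p : MvPolynomial ι ℝ} {d : ℕ} (hp : p.IsHomogeneous d) (ν : Measure ℝ) [SigmaFinite ν]
    [NullSingletonClass ν] {k : ι} (hk : eval (Pi.single k 1) p ≠ 0) :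
    Measure.pi (fun _ : ι => ν) {x | eval x p = 0} = 0 := by
  refine Measure.pi_eq_zero_of_forall_update _ k
    (measurableSet_eq_fun (continuous_eval _).measurable measurable_const) fun x => ?_
  have hline : ∀ t : ℝ, Function.update x k t = Function.update x k 0 + t • Pi.single k 1 := by
    intro t
    ext j
    by_cases hj : j = k <;> simp [hj]
  refine measure_mono_null (fun t ht => ?_)
    ((hp.finite_setOf_eval_add_smul_eq_zero (Function.update x k 0) hk).measure_zero ν)
  simpa [hline t] using ht

end MvPolynomial

section Forms

variable {ι R : Type*} [CommRing R]

def tailImbalance (i : ι) (s : Finset ι) (x z : ι → R) : R :=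
  z i ^ 2 * ∑ j ∈ s, x j ^ 2 - x i ^ 2 * ∑ j ∈ s, z j ^ 2

def tailPolar (i : ι) (s : Finset ι) (x v : ι → R) : R :=
  x i * v i * ∑ j ∈ s, x j ^ 2 - x i ^ 2 * ∑ j ∈ s, x j * v j

variable {i : ι} {s : Finset ι}

theorem tailImbalance_smul_left (c : R) (x z : ι → R) :
    tailImbalance i s (c • x) z = c ^ 2 * tailImbalance i s x z := by
  simp only [tailImbalance, Pi.smul_apply, smul_eq_mul, mul_pow, ← Finset.mul_sum]
  ring

theorem tailImbalance_smul_add_smul (p r : R) (x v : ι → R) :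
    tailImbalance i s x (p • x + r • v) =
      2 * p * r * tailPolar i s x v + r ^ 2 * tailImbalance i s x v := by
  have hsum : ∑ j ∈ s, (p * x j + r * v j) ^ 2 =
      p ^ 2 * ∑ j ∈ s, x j ^ 2 + 2 * p * r * ∑ j ∈ s, x j * v j + r ^ 2 * ∑ j ∈ s, v j ^ 2 := by
    simp only [Finset.mul_sum, ← Finset.sum_add_distrib]
    exact Finset.sum_congr rfl fun j _ => by ring
  simp only [tailImbalance, tailPolar, Pi.add_apply, Pi.smul_apply, smul_eq_mul, hsum]
  ring

variable [Fintype ι]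

def imbalanceQuartic (i : ι) (s : Finset ι) (a : R) (x v : ι → R) : R :=
  4 * a ^ 2 * (∑ l, v l ^ 2) * tailPolar i s x v ^ 2 -
    (1 - a ^ 2) * (∑ l, x l ^ 2) * tailImbalance i s x v ^ 2

def scaledRejection (x y : ι → R) : ι → R :=
  (∑ l, x l ^ 2) • y - (∑ l, x l * y l) • x

def leadingDefect (i : ι) (a : R) (x : ι → R) : R :=
  a ^ 2 * (∑ l, x l ^ 2) ^ 2 - (∑ l, x l ^ 2 - 2 * x i ^ 2) ^ 2

theorem scaledRejection_single [DecidableEq ι] (x : ι → R) :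
    scaledRejection x (Pi.single i 1) = (∑ l, x l ^ 2) • Pi.single i 1 - x i • x := by
  simp [scaledRejection, Pi.single_apply]

theorem imbalanceQuartic_scaledRejection_single [DecidableEq ι] (hi : i ∉ s) (a : R)
    (x : ι → R) :
    imbalanceQuartic i s a x (scaledRejection x (Pi.single i 1)) =
      (∑ l, x l ^ 2) ^ 3 * (∑ j ∈ s, x j ^ 2) ^ 2 * leadingDefect i a x := by
  set n := ∑ l, x l ^ 2
  set β := scaledRejection x (Pi.single i 1)
  have hβ : ∀ j ∈ s, β j = -(x i * x j) := fun j hj => by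
    simp [β, scaledRejection_single, ne_of_mem_of_not_mem hj hi]
  have hβi : β i = n - x i ^ 2 := by simp [β, scaledRejection_single, sq, n]
  have hnorm : ∑ l, β l ^ 2 = n * (n - x i ^ 2) := by
    simp only [β, scaledRejection_single, Pi.sub_apply, Pi.smul_apply, smul_eq_mul, sub_sq,
      Finset.sum_add_distrib, Finset.sum_sub_distrib, mul_pow, ← Finset.mul_sum]
    simp [Pi.single_apply, n]
    ring
  have hcross : ∑ j ∈ s, x j * β j = -(x i * ∑ j ∈ s, x j ^ 2) := by
    rw [Finset.mul_sum, ← Finset.sum_neg_distrib]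
    exact Finset.sum_congr rfl fun j hj => by rw [hβ j hj]; ring
  have htail : ∑ j ∈ s, β j ^ 2 = x i ^ 2 * ∑ j ∈ s, x j ^ 2 := by
    rw [Finset.mul_sum]
    exact Finset.sum_congr rfl fun j hj => by rw [hβ j hj]; ring
  simp only [imbalanceQuartic, tailPolar, tailImbalance, leadingDefect, hnorm, hβi, hcross, htail]
  ring

end Forms

section Polynomials

open MvPolynomial

variable {ι R : Type*} [Fintype ι] [CommRing R]

noncomputable def imbalancePoly (i : ι) (s : Finset ι) (a : R) (x : ι → R) : MvPolynomial ι R :=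
  imbalanceQuartic i s (C a) (C ∘ x) (scaledRejection (C ∘ x) X)

noncomputable def leadingDefectPoly (i : ι) (a : R) : MvPolynomial ι R :=
  leadingDefect i (C a) X

variable {i : ι} {s : Finset ι}

theorem eval_imbalancePoly (a : R) (x y : ι → R) :
    eval y (imbalancePoly i s a x) = imbalanceQuartic i s a x (scaledRejection x y) := by
  simp [imbalancePoly, imbalanceQuartic, tailPolar, tailImbalance, scaledRejection]

theorem eval_leadingDefectPoly (a : R) (x : ι → R) :
    eval x (leadingDefectPoly i a) = leadingDefect i a x := by
  simp [leadingDefectPoly, leadingDefect]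

theorem isHomogeneous_leadingDefectPoly (a : R) :
    (leadingDefectPoly i a : MvPolynomial ι R).IsHomogeneous 4 := by
  have hn : (∑ l, X l ^ 2 : MvPolynomial ι R).IsHomogeneous 2 :=
    IsHomogeneous.sum _ _ _ fun l _ => isHomogeneous_X_pow l 2
  exact (((isHomogeneous_C ι a).pow 2).mul (hn.pow 2)).sub
    ((hn.sub ((isHomogeneous_ofNat 2).mul (isHomogeneous_X_pow i 2))).pow 2)

theorem isHomogeneous_imbalancePoly (a : R) (x : ι → R) :
    (imbalancePoly i s a x).IsHomogeneous 4 := by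
  set V := scaledRejection (C ∘ x) (X : ι → MvPolynomial ι R)
  have hC : ∀ r : R, (C r : MvPolynomial ι R).IsHomogeneous 0 := isHomogeneous_C ι
  have hnx : (∑ l, (C ∘ x) l ^ 2 : MvPolynomial ι R).IsHomogeneous 0 :=
    IsHomogeneous.sum _ _ _ fun l _ => (hC _).pow 2
  have hV : ∀ j, (V j).IsHomogeneous 1 := fun j =>
    (hnx.mul (isHomogeneous_X R j)).sub
      ((IsHomogeneous.sum _ _ _ fun l _ => (hC _).mul (isHomogeneous_X R l)).mul (hC _))
  have hpolar : (tailPolar i s (C ∘ x) V).IsHomogeneous 1 :=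
    (((hC _).mul (hV i)).mul (IsHomogeneous.sum _ _ _ fun j _ => (hC _).pow 2)).sub
      (((hC _).pow 2).mul (IsHomogeneous.sum _ _ _ fun j _ => (hC _).mul (hV j)))
  have himb : (tailImbalance i s (C ∘ x) V).IsHomogeneous 2 :=
    (((hV i).pow 2).mul (IsHomogeneous.sum _ _ _ fun j _ => (hC _).pow 2)).sub
      (((hC _).pow 2).mul (IsHomogeneous.sum _ _ _ fun j _ => (hV j).pow 2))
  have hnorm : (∑ l, V l ^ 2).IsHomogeneous 2 := IsHomogeneous.sum _ _ _ fun l _ => (hV l).pow 2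
  exact ((((isHomogeneous_ofNat 4).mul ((hC a).pow 2)).mul hnorm).mul (hpolar.pow 2)).sub
    ((((isHomogeneous_one ι R).sub ((hC a).pow 2)).mul hnx).mul (himb.pow 2))

end Polynomials

section Gaussian

variable {m : ℕ} {i : Fin m} {s : Finset (Fin m)} {a : ℝ}

theorem unitize_eq_smul (x : Fin m → ℝ) : unitize m x = (√(∑ l, x l ^ 2))⁻¹ • x := by
  ext j
  simp [unitize, div_eq_inv_mul]

theorem unitize_smul {c : ℝ} (hc : 0 < c) (x : Fin m → ℝ) : unitize m (c • x) = unitize m x := by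
  have hsum : ∑ l, (c • x) l ^ 2 = c ^ 2 * ∑ l, x l ^ 2 := by
    simp [mul_pow, Finset.mul_sum]
  rw [unitize_eq_smul, unitize_eq_smul, hsum, Real.sqrt_mul (sq_nonneg c), Real.sqrt_sq hc.le,
    smul_smul, mul_inv, mul_comm c⁻¹, mul_assoc, inv_mul_cancel₀ hc.ne', mul_one]

theorem zetaPrime_eq {x : Fin m → ℝ} (hx : 0 < ∑ l, x l ^ 2) (y : Fin m → ℝ) :
    zetaPrime m a x y = (a / √(∑ l, x l ^ 2)) • x +
      (√(1 - a ^ 2) / √(∑ l, scaledRejection x y l ^ 2)) • scaledRejection x y := by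
  have hrej : (fun l => y l - (∑ l', unitize m x l' * y l') * unitize m x l) =
      (∑ l, x l ^ 2)⁻¹ • scaledRejection x y := by
    ext l
    simp only [unitize_eq_smul, Pi.smul_apply, smul_eq_mul, scaledRejection, Pi.sub_apply,
      mul_assoc, ← Finset.mul_sum]
    field_simp
    rw [Real.sq_sqrt hx.le]
    ring
  ext j
  rw [zetaPrime, hrej, unitize_smul (inv_pos.mpr hx), unitize_eq_smul, unitize_eq_smul]
  simp only [Pi.add_apply, Pi.smul_apply, smul_eq_mul]
  ring

theorem imbalanceQuartic_eq_zero_of_tailImbalance_zetaPrime (ha : a ^ 2 < 1) {x : Fin m → ℝ}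
    (hx : 0 < ∑ l, x l ^ 2) {y : Fin m → ℝ}
    (h : tailImbalance i s (unitize m x) (zetaPrime m a x y) = 0) :
    imbalanceQuartic i s a x (scaledRejection x y) = 0 := by
  rw [unitize_eq_smul, tailImbalance_smul_left, zetaPrime_eq hx, tailImbalance_smul_add_smul,
    mul_eq_zero] at h
  replace h := h.resolve_left (by positivity)
  set n := ∑ l, x l ^ 2
  set v := scaledRejection x y
  set Q := ∑ l, v l ^ 2
  rcases (show 0 ≤ Q by positivity).eq_or_lt with hQ | hQ
  · have hv : v = 0 := funext fun l =>
      pow_eq_zero_iff two_ne_zero |>.mp <|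
        (Finset.sum_eq_zero_iff_of_nonneg fun l _ => sq_nonneg (v l)).mp hQ.symm l
          (Finset.mem_univ l)
    simp [imbalanceQuartic, tailPolar, tailImbalance, hv]
  have hr : √(1 - a ^ 2) / √Q ≠ 0 := by positivity
  have hlin : 2 * (a / √n) * tailPolar i s x v =
      -(√(1 - a ^ 2) / √Q * tailImbalance i s x v) := by
    have : √(1 - a ^ 2) / √Q * (2 * (a / √n) * tailPolar i s x v +
        √(1 - a ^ 2) / √Q * tailImbalance i s x v) = 0 := by linear_combination h
    linear_combination (mul_eq_zero.mp this).resolve_left hr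
  have hsq := congrArg (· ^ 2) hlin
  simp only [mul_pow, div_pow, neg_sq, Real.sq_sqrt hx.le, Real.sq_sqrt hQ.le,
    Real.sq_sqrt (by linarith : (0:ℝ) ≤ 1 - a ^ 2)] at hsq
  field_simp at hsq
  unfold imbalanceQuartic
  linear_combination hsq

theorem measurableSet_setOf_tailImbalance_zetaPrime (i : Fin m) (s : Finset (Fin m)) (a : ℝ) :
    MeasurableSet {p : (Fin m → ℝ) × (Fin m → ℝ) |
      tailImbalance i s (unitize m p.1) (zetaPrime m a p.1 p.2) = 0} := by
  have hu : Measurable (unitize m) := by unfold unitize; fun_prop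
  have hz : Measurable fun p : (Fin m → ℝ) × (Fin m → ℝ) => zetaPrime m a p.1 p.2 := by
    unfold zetaPrime unitize; fun_prop
  refine measurableSet_eq_fun ?_ measurable_const
  unfold tailImbalance
  fun_prop

variable (ν : Measure ℝ) [SigmaFinite ν] [NullSingletonClass ν]

theorem pi_setOf_tailImbalance_zetaPrime_eq_zero (ha : a ^ 2 < 1) (hi : i ∉ s)
    {x : Fin m → ℝ} (hS : 0 < ∑ j ∈ s, x j ^ 2) (hx : leadingDefect i a x ≠ 0) :
    Measure.pi (fun _ => ν) {y | tailImbalance i s (unitize m x) (zetaPrime m a x y) = 0} = 0 := by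
  have hn : 0 < ∑ l, x l ^ 2 :=
    hS.trans_le (Finset.sum_le_univ_sum_of_nonneg fun l => sq_nonneg (x l))
  refine measure_mono_null (fun y hy => ?_)
    ((isHomogeneous_imbalancePoly (i := i) (s := s) a x).pi_setOf_eval_eq_zero ν (k := i) ?_)
  · simpa [eval_imbalancePoly] using
      imbalanceQuartic_eq_zero_of_tailImbalance_zetaPrime ha hn hy
  · rw [eval_imbalancePoly, imbalanceQuartic_scaledRejection_single hi]
    positivity

theorem prod_setOf_tailImbalance_zetaPrime_eq_zero (ha : a ^ 2 < 1) (hi : i ∉ s) {k : Fin m}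
    (hk : k ∈ s) :
    ((Measure.pi fun _ => ν).prod (Measure.pi fun _ => ν))
      {p | tailImbalance i s (unitize m p.1) (zetaPrime m a p.1 p.2) = 0} = 0 := by
  rw [Measure.measure_prod_null (measurableSet_setOf_tailImbalance_zetaPrime i s a)]
  have hxk : ∀ᵐ x ∂Measure.pi fun _ => ν, x k ≠ 0 := ae_iff.mpr <| by
    simpa using (MvPolynomial.isHomogeneous_X ℝ k).pi_setOf_eval_eq_zero ν (k := k) (by simp)
  have hdefect : ∀ᵐ x ∂Measure.pi fun _ => ν, leadingDefect i a x ≠ 0 := ae_iff.mpr <| by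
    simpa [eval_leadingDefectPoly] using
      (isHomogeneous_leadingDefectPoly (ι := Fin m) (i := i) a).pi_setOf_eval_eq_zero ν
        (k := i) (by simp [eval_leadingDefectPoly, leadingDefect, Pi.single_apply, ite_pow]
                     nlinarith)
  filter_upwards [hxk, hdefect] with x hxk hdefect
  exact pi_setOf_tailImbalance_zetaPrime_eq_zero ν ha hi
    (Finset.sum_pos' (fun j _ => sq_nonneg (x j)) ⟨k, hk, by positivity⟩) hdefect

end Gaussian

theorem gaussian_generic_coordinates_general
    {Ω : Type*} [MeasurableSpace Ω] (P : Measure Ω) [IsProbabilityMeasure P]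
    (m : ℕ) (a : ℝ) (ha : a ∈ Set.Ioo (-1 : ℝ) 1)
    (X Y : Ω → Fin m → ℝ)
    (hXmeas : Measurable X) (hYmeas : Measurable Y)
    (hX : Measure.map X P = Measure.pi fun _ : Fin m => gaussianReal 0 1)
    (hY : Measure.map Y P = Measure.pi fun _ : Fin m => gaussianReal 0 1)
    (hindep : IndepFun X Y P) :
    ∀ i : Fin m, (i : ℕ) + 1 < m →
      P {ω | (zetaPrime m a (X ω) (Y ω) i) ^ 2 *
              ∑ j ∈ Finset.univ.filter (fun j : Fin m => i < j), (unitize m (X ω) j) ^ 2 =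
            (unitize m (X ω) i) ^ 2 *
              ∑ j ∈ Finset.univ.filter (fun j : Fin m => i < j),
                (zetaPrime m a (X ω) (Y ω) j) ^ 2} = 0 := by
  intro i hi
  have := nullSingletonClass_gaussianReal (μ := 0) one_ne_zero
  have hlaw : P.map (fun ω => (X ω, Y ω)) = (P.map X).prod (P.map Y) :=
    (indepFun_iff_map_prod_eq_prod_map_map hXmeas.aemeasurable hYmeas.aemeasurable).mp hindep
  have hevent : {ω | (zetaPrime m a (X ω) (Y ω) i) ^ 2 *
              ∑ j ∈ Finset.univ.filter (fun j : Fin m => i < j), (unitize m (X ω) j) ^ 2 =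
            (unitize m (X ω) i) ^ 2 *
              ∑ j ∈ Finset.univ.filter (fun j : Fin m => i < j),
                (zetaPrime m a (X ω) (Y ω) j) ^ 2} =
      (fun ω => (X ω, Y ω)) ⁻¹' {p | tailImbalance i (Finset.univ.filter (i < ·))
        (unitize m p.1) (zetaPrime m a p.1 p.2) = 0} :=
    Set.ext fun ω => sub_eq_zero.symm
  rw [hevent, ← Measure.map_apply (hXmeas.prodMk hYmeas)
    (measurableSet_setOf_tailImbalance_zetaPrime _ _ _), hlaw, hX, hY]
  exact prod_setOf_tailImbalance_zetaPrime_eq_zero _ (by nlinarith [ha.1, ha.2])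
    (by simp) (k := ⟨i + 1, hi⟩)
    (Finset.mem_filter.mpr ⟨Finset.mem_univ _, Fin.lt_def.mpr (Nat.lt_succ_self _)⟩)

/-- Key null-set claim in the proof of Lemma 3.2: if `x, y` are independent standard Gaussian
vectors in `ℝ^m`, `ζ = x̃ = x/‖x‖₂` and
`ζ' = a·x̃ + √(1−a²)·(y − ⟨x̃,y⟩·x̃)/‖y − ⟨x̃,y⟩·x̃‖₂`, then for every `i ∈ {1,…,m−1}` the
probability that `(ζ'_i)²·Σ_{j>i}(ζ_j)² = (ζ_i)²·Σ_{j>i}(ζ'_j)²` is zero. -/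
theorem gaussian_generic_coordinates
    {Ω : Type*} [MeasurableSpace Ω] (P : Measure Ω) [IsProbabilityMeasure P]
    (m : ℕ) (hm : 2 ≤ m) (a : ℝ) (ha : a ∈ Set.Ioo (-1 : ℝ) 1)
    (X Y : Ω → Fin m → ℝ)
    (hXmeas : Measurable X) (hYmeas : Measurable Y)
    (hX : Measure.map X P = Measure.pi fun _ : Fin m => gaussianReal 0 1)
    (hY : Measure.map Y P = Measure.pi fun _ : Fin m => gaussianReal 0 1)
    (hindep : IndepFun X Y P) :
    ∀ i : Fin m, (i : ℕ) + 1 < m →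
      P {ω | (zetaPrime m a (X ω) (Y ω) i) ^ 2 *
              ∑ j ∈ Finset.univ.filter (fun j : Fin m => i < j), (unitize m (X ω) j) ^ 2 =
            (unitize m (X ω) i) ^ 2 *
              ∑ j ∈ Finset.univ.filter (fun j : Fin m => i < j),
                (zetaPrime m a (X ω) (Y ω) j) ^ 2} = 0 :=
  gaussian_generic_coordinates_general P m a ha X Y hXmeas hYmeas hX hY hindep
end

section
/- For all x₁, x₂ ∈ [0, π/2) ∪ (π/2, π] with |x₁ − π/2| ≥ |x₂ − π/2|, one has |cos x₁| ≤ |cos x₂| · |x₁ − π/2| / |x₂ − π/2|. (Lemma E.2, claim 2.) -/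
open Real

lemma aux_mem (x : ℝ) (hx : x ∈ Set.Ico 0 (Real.pi / 2) ∪ Set.Ioc (Real.pi / 2) Real.pi) :
    0 < |x - Real.pi / 2| ∧ |x - Real.pi / 2| ≤ Real.pi / 2 := by
  have := Real.pi_pos
  rcases hx with ⟨h0, h1⟩ | ⟨h0, h1⟩ <;>
    refine ⟨abs_pos.mpr (by intro hc; rw [sub_eq_zero] at hc; first | exact absurd hc h1.ne | exact absurd hc.symm h0.ne), abs_le.mpr ⟨by linarith, by linarith⟩⟩

lemma aux_absin (t : ℝ) (ht : |t| ≤ Real.pi) : |Real.sin t| = Real.sin |t| := by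
  rcases le_or_gt 0 t with h | h
  · rw [abs_of_nonneg h] at *
    exact abs_of_nonneg (Real.sin_nonneg_of_nonneg_of_le_pi h ht)
  · rw [abs_of_neg h] at *
    rw [Real.sin_neg]
    have : 0 ≤ Real.sin (-t) := Real.sin_nonneg_of_nonneg_of_le_pi (by linarith) ht
    rw [Real.sin_neg] at this
    exact abs_of_nonpos (by linarith)

lemma aux_abscos (x : ℝ) (hx : |x - Real.pi / 2| ≤ Real.pi / 2) :
    |Real.cos x| = Real.sin |x - Real.pi / 2| := by
  have := Real.pi_pos
  rw [← Real.sin_pi_div_two_sub x, show Real.pi / 2 - x = -(x - Real.pi / 2) by ring,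
    Real.sin_neg, abs_neg, aux_absin _ (by linarith)]

lemma aux_concave {a b : ℝ} (hb : 0 < b) (hba : b ≤ a) (ha : a ≤ Real.pi) :
    Real.sin a * b ≤ Real.sin b * a := by
  have ha0 : 0 < a := lt_of_lt_of_le hb hba
  have hc := strictConcaveOn_sin_Icc.concaveOn.2
    (⟨le_refl (0:ℝ), Real.pi_pos.le⟩ : (0:ℝ) ∈ Set.Icc 0 Real.pi) ⟨ha0.le, ha⟩
    (sub_nonneg.mpr (div_le_one_of_le₀ hba ha0.le))
    (by positivity : (0:ℝ) ≤ b / a) (by ring : (1 - b / a) + b / a = 1)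
  simp only [smul_eq_mul, mul_zero, zero_add, Real.sin_zero, div_mul_cancel₀ _ ha0.ne'] at hc
  rw [div_mul_eq_mul_div] at hc
  have h2 := (div_le_iff₀ ha0).mp hc
  linarith

/-- Lemma E.2, claim 2. -/
theorem abs_cos_comparison (x₁ x₂ : ℝ)
    (h1 : x₁ ∈ Set.Ico 0 (Real.pi / 2) ∪ Set.Ioc (Real.pi / 2) Real.pi)
    (h2 : x₂ ∈ Set.Ico 0 (Real.pi / 2) ∪ Set.Ioc (Real.pi / 2) Real.pi)
    (h : |x₂ - Real.pi / 2| ≤ |x₁ - Real.pi / 2|) :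
    |Real.cos x₁| ≤ |Real.cos x₂| * |x₁ - Real.pi / 2| / |x₂ - Real.pi / 2| := by
  obtain ⟨hb1, hb2⟩ := aux_mem x₁ h1
  obtain ⟨ha1, ha2⟩ := aux_mem x₂ h2
  have := Real.pi_pos
  rw [aux_abscos x₁ hb2, aux_abscos x₂ ha2, le_div_iff₀ ha1]
  exact aux_concave ha1 h (by linarith)
end

section
/- For every integer k ≥ 1 and all α, α' ∈ [0, π]^{k−1} × [0, 2π) (the first k−1 coordinates in [0, π] and the last coordinate in [0, 2π)), one has ‖ρ_k(α) − ρ_k(α')‖₂ ≤ ‖α − α'‖₁ = Σ_{i=1}^{k} |α_i − α'_i|. (Lemma E.3: the spherical-coordinate map is 1-Lipschitz from the ℓ¹ norm to the Euclidean norm.) -/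
/-- The spherical-coordinate map `ρ_k : ℝ^k → ℝ^(k+1)`:
`ρ_k(α)_i = (∏_{j<i} sin α_j)·cos α_i` for `i < k` and `ρ_k(α)_k = ∏_j sin α_j`. -/
noncomputable def sphCoord (k : ℕ) (α : Fin k → ℝ) : Fin (k + 1) → ℝ := fun i =>
  if h : (i : ℕ) < k then
    (∏ j ∈ Finset.univ.filter (fun j : Fin k => (j : ℕ) < (i : ℕ)), Real.sin (α j)) *
      Real.cos (α ⟨(i : ℕ), h⟩)
  else
    ∏ j, Real.sin (α j)

lemma sphCoord_zero (k : ℕ) (α : Fin (k + 1) → ℝ) :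
    sphCoord (k + 1) α 0 = Real.cos (α 0) := by
  have h0 : ((0 : Fin (k + 2)) : ℕ) < k + 1 := Nat.succ_pos k
  rw [sphCoord, dif_pos h0]
  have : Finset.univ.filter (fun j : Fin (k+1) => (j : ℕ) < ((0 : Fin (k+2)) : ℕ)) = ∅ := by
    ext j; simp
  rw [this]
  simp

lemma sphCoord_succ (k : ℕ) (α : Fin (k + 1) → ℝ) (i : Fin (k + 1)) :
    sphCoord (k + 1) α i.succ = Real.sin (α 0) * sphCoord k (fun j => α j.succ) i := by
  have hcoe : ((i.succ : Fin (k + 2)) : ℕ) = (i : ℕ) + 1 := rfl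
  by_cases h : (i : ℕ) < k
  · have h1 : ((i.succ : Fin (k + 2)) : ℕ) < k + 1 := by omega
    rw [sphCoord, dif_pos h1, sphCoord, dif_pos h]
    have hprod : (∏ j ∈ Finset.univ.filter (fun j : Fin (k+1) => (j : ℕ) < ((i.succ : Fin (k+2)) : ℕ)), Real.sin (α j))
        = Real.sin (α 0) * ∏ j ∈ Finset.univ.filter (fun j : Fin k => (j : ℕ) < (i : ℕ)), Real.sin (α j.succ) := by
      rw [Finset.prod_filter, Finset.prod_filter, Fin.prod_univ_succ]
      simp only [hcoe, Fin.val_zero, Fin.val_succ]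
      rw [if_pos (Nat.succ_pos _)]
      congr 1
      apply Finset.prod_congr rfl
      intro j _
      by_cases hj : (j : ℕ) < (i : ℕ)
      · rw [if_pos (by omega), if_pos hj]
      · rw [if_neg (by omega), if_neg hj]
    have harg : (α ⟨((i.succ : Fin (k + 2)) : ℕ), h1⟩ : ℝ) = α ((⟨(i : ℕ), h⟩ : Fin k).succ) := by
      congr 1
    rw [hprod, harg, mul_assoc]
  · have h1 : ¬ ((i.succ : Fin (k + 2)) : ℕ) < k + 1 := by omega
    rw [sphCoord, dif_neg h1, sphCoord, dif_neg h]
    rw [Fin.prod_univ_succ]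

lemma sphCoord_sum_sq (k : ℕ) (α : Fin k → ℝ) : ∑ i, (sphCoord k α i) ^ 2 = 1 := by
  induction k with
  | zero =>
      simp [sphCoord]
  | succ k ih =>
      rw [Fin.sum_univ_succ]
      simp only [sphCoord_zero, sphCoord_succ]
      have : ∑ i : Fin (k + 1), (Real.sin (α 0) * sphCoord k (fun j => α j.succ) i) ^ 2
          = Real.sin (α 0) ^ 2 * ∑ i, (sphCoord k (fun j => α j.succ) i) ^ 2 := by
        rw [Finset.mul_sum]; apply Finset.sum_congr rfl; intros; ring
      rw [this, ih]
      have := Real.sin_sq_add_cos_sq (α 0)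
      linarith

/-- `√(x² + (y+D)²) ≤ √(x² + y²) + D` for `y, D ≥ 0`. -/
lemma aux_sqrt (x y D : ℝ) (hy : 0 ≤ y) (hD : 0 ≤ D) :
    Real.sqrt (x ^ 2 + (y + D) ^ 2) ≤ Real.sqrt (x ^ 2 + y ^ 2) + D := by
  set s := Real.sqrt (x ^ 2 + y ^ 2) with hs
  have hs0 : 0 ≤ s := Real.sqrt_nonneg _
  have hs2 : s ^ 2 = x ^ 2 + y ^ 2 := Real.sq_sqrt (by positivity)
  have hys : y ≤ s := by
    rw [hs]
    calc y = Real.sqrt (y ^ 2) := (Real.sqrt_sq hy).symm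
    _ ≤ _ := Real.sqrt_le_sqrt (by nlinarith [sq_nonneg x])
  calc Real.sqrt (x ^ 2 + (y + D) ^ 2) ≤ Real.sqrt ((s + D) ^ 2) :=
        Real.sqrt_le_sqrt (by nlinarith)
    _ = s + D := Real.sqrt_sq (by linarith)

/-- The global Lipschitz estimate, no domain assumptions needed. -/
lemma sphCoord_lip (k : ℕ) (α α' : Fin k → ℝ) :
    Real.sqrt (∑ i, (sphCoord k α i - sphCoord k α' i) ^ 2) ≤ ∑ i, |α i - α' i| := by
  induction k with
  | zero =>
      simp [sphCoord]
  | succ k ih =>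
      set β : Fin k → ℝ := fun j => α j.succ with hβ
      set β' : Fin k → ℝ := fun j => α' j.succ with hβ'
      set v : Fin (k + 1) → ℝ := sphCoord k β with hv
      set v' : Fin (k + 1) → ℝ := sphCoord k β' with hv'
      set s : ℝ := Real.sin (α 0)
      set s' : ℝ := Real.sin (α' 0)
      set D : ℝ := Real.sqrt (∑ i, (v i - v' i) ^ 2) with hDdef
      have hD0 : 0 ≤ D := Real.sqrt_nonneg _
      have hD2 : D ^ 2 = ∑ i, (v i - v' i) ^ 2 := Real.sq_sqrt (by positivity)
      -- decompose the sum
      rw [Fin.sum_univ_succ]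
      simp only [sphCoord_zero, sphCoord_succ, ← hβ, ← hβ', ← hv, ← hv']
      -- bound the tail sum
      have hvsq : ∑ i, v i ^ 2 = 1 := sphCoord_sum_sq k β
      have hCS : (∑ i, v i * (v i - v' i)) ^ 2 ≤ (∑ i, v i ^ 2) * ∑ i, (v i - v' i) ^ 2 :=
        Finset.sum_mul_sq_le_sq_mul_sq _ _ _
      have hs'1 : s' ^ 2 ≤ 1 := by
        have := Real.neg_one_le_sin (α' 0)
        have := Real.sin_le_one (α' 0)
        nlinarith
      have htail : ∑ i, (s * v i - s' * v' i) ^ 2 ≤ (|s - s'| + D) ^ 2 := by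
        have hexp : ∑ i, (s * v i - s' * v' i) ^ 2
            = (s - s') ^ 2 * (∑ i, v i ^ 2) + 2 * s' * (s - s') * (∑ i, v i * (v i - v' i))
              + s' ^ 2 * (∑ i, (v i - v' i) ^ 2) := by
          rw [Finset.mul_sum, Finset.mul_sum, Finset.mul_sum, ← Finset.sum_add_distrib,
            ← Finset.sum_add_distrib]
          apply Finset.sum_congr rfl
          intro i _
          ring
        rw [hexp, hvsq]
        have habs : |s - s'| ^ 2 = (s - s') ^ 2 := sq_abs _
        have hC : (∑ i, v i * (v i - v' i)) ^ 2 ≤ ∑ i, (v i - v' i) ^ 2 := by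
          calc (∑ i, v i * (v i - v' i)) ^ 2 ≤ _ := hCS
          _ = ∑ i, (v i - v' i) ^ 2 := by rw [hvsq, one_mul]
        have h2 : 2 * s' * (s - s') * (∑ i, v i * (v i - v' i)) ≤ 2 * |s - s'| * D := by
          calc 2 * s' * (s - s') * (∑ i, v i * (v i - v' i))
              ≤ |2 * s' * (s - s') * (∑ i, v i * (v i - v' i))| := le_abs_self _
            _ = 2 * |s'| * |s - s'| * |∑ i, v i * (v i - v' i)| := by
                rw [abs_mul, abs_mul, abs_mul]; simp
            _ ≤ 2 * 1 * |s - s'| * D := by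
                have h1 : |s'| ≤ 1 := abs_le.mpr ⟨Real.neg_one_le_sin _, Real.sin_le_one _⟩
                have h2 : |∑ i, v i * (v i - v' i)| ≤ D := by
                  rw [← Real.sqrt_sq_eq_abs, hDdef]
                  exact Real.sqrt_le_sqrt hC
                gcongr <;> positivity
            _ = 2 * |s - s'| * D := by ring
        nlinarith [sq_nonneg (s - s'), hD2,
          Finset.sum_nonneg (fun i (_ : i ∈ Finset.univ) => sq_nonneg (v i - v' i)), hC]
      -- combine
      have step1 : Real.sqrt ((Real.cos (α 0) - Real.cos (α' 0)) ^ 2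
            + ∑ i, (s * v i - s' * v' i) ^ 2)
          ≤ Real.sqrt ((Real.cos (α 0) - Real.cos (α' 0)) ^ 2 + (|s - s'| + D) ^ 2) :=
        Real.sqrt_le_sqrt (by linarith)
      have step2 : Real.sqrt ((Real.cos (α 0) - Real.cos (α' 0)) ^ 2 + (|s - s'| + D) ^ 2)
          ≤ Real.sqrt ((Real.cos (α 0) - Real.cos (α' 0)) ^ 2 + |s - s'| ^ 2) + D :=
        aux_sqrt _ _ _ (abs_nonneg _) hD0
      have step3 : Real.sqrt ((Real.cos (α 0) - Real.cos (α' 0)) ^ 2 + |s - s'| ^ 2)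
          ≤ |α 0 - α' 0| := by
        have hcos : (Real.cos (α 0) - Real.cos (α' 0)) ^ 2 + (s - s') ^ 2
            ≤ (α 0 - α' 0) ^ 2 := by
          have h1 : (Real.cos (α 0) - Real.cos (α' 0)) ^ 2 + (s - s') ^ 2
              = 2 - 2 * Real.cos (α 0 - α' 0) := by
            rw [Real.cos_sub]
            have ha := Real.sin_sq_add_cos_sq (α 0)
            have hb := Real.sin_sq_add_cos_sq (α' 0)
            simp only [s, s']
            nlinarith
          have h2 := Real.one_sub_sq_div_two_le_cos (x := α 0 - α' 0)
          nlinarith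
        rw [sq_abs]
        calc Real.sqrt ((Real.cos (α 0) - Real.cos (α' 0)) ^ 2 + (s - s') ^ 2)
            ≤ Real.sqrt ((α 0 - α' 0) ^ 2) := Real.sqrt_le_sqrt hcos
          _ = |α 0 - α' 0| := Real.sqrt_sq_eq_abs _
      have hIH : D ≤ ∑ i : Fin k, |β i - β' i| := ih β β'
      calc Real.sqrt ((Real.cos (α 0) - Real.cos (α' 0)) ^ 2
            + ∑ i : Fin (k+1), (s * v i - s' * v' i) ^ 2)
          ≤ Real.sqrt ((Real.cos (α 0) - Real.cos (α' 0)) ^ 2 + |s - s'| ^ 2) + D :=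
            le_trans step1 step2
        _ ≤ |α 0 - α' 0| + ∑ i : Fin k, |β i - β' i| := by
            have := step3; linarith
        _ = ∑ i : Fin (k + 1), |α i - α' i| :=
            (Fin.sum_univ_succ (fun i : Fin (k + 1) => |α i - α' i|)).symm

/-- Lemma E.3: the spherical-coordinate map is 1-Lipschitz from the ℓ¹ norm to the
Euclidean norm on the domain `[0, π]^{k-1} × [0, 2π)`. -/
theorem sphCoord_lipschitz (k : ℕ) (hk : 1 ≤ k) (α α' : Fin k → ℝ)
    (hα : ∀ i : Fin k, ((i : ℕ) + 1 < k → α i ∈ Set.Icc 0 Real.pi) ∧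
      ((i : ℕ) + 1 = k → α i ∈ Set.Ico 0 (2 * Real.pi)))
    (hα' : ∀ i : Fin k, ((i : ℕ) + 1 < k → α' i ∈ Set.Icc 0 Real.pi) ∧
      ((i : ℕ) + 1 = k → α' i ∈ Set.Ico 0 (2 * Real.pi))) :
    Real.sqrt (∑ i, (sphCoord k α i - sphCoord k α' i) ^ 2) ≤ ∑ i, |α i - α' i| := by
  exact sphCoord_lip k α α'
end

section
/- For every integer k ≥ 1, every α ∈ ℝ^k and every β ∈ ℝ, one has ⟨ρ_k(π/2, …, π/2, β), ρ_k(α)⟩ = cos(α_k − β) · ∏_{j=1}^{k−1} sin α_j, where the first argument of ρ_k has its first k−1 coordinates equal to π/2 and its last coordinate equal to β, and the empty product (case k = 1) equals 1. (The inner-product identity underlying the sector test, equation (4.3) of the paper.) -/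
/-- The inner-product identity underlying the sector test (equation (4.3)):
`⟨ρ_k(π/2, …, π/2, β), ρ_k(α)⟩ = cos(α_k − β) · ∏_{j=1}^{k−1} sin α_j`. -/
theorem sphCoord_inner_sector (k : ℕ) (hk : 1 ≤ k) (α : Fin k → ℝ) (β : ℝ) :
    ∑ i, sphCoord k (fun j => if (j : ℕ) + 1 = k then β else Real.pi / 2) i * sphCoord k α i =
      Real.cos (α ⟨k - 1, by omega⟩ - β) *
        ∏ j ∈ Finset.univ.filter (fun j : Fin k => (j : ℕ) + 1 < k), Real.sin (α j) := by
  classical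
  set γ : Fin k → ℝ := fun j => if (j : ℕ) + 1 = k then β else Real.pi / 2 with hγ
  have h1 : k - 1 < k + 1 := by omega
  have h2 : k < k + 1 := by omega
  have hk1 : (k - 1 : ℕ) < k := by omega
  set e1 : Fin (k + 1) := ⟨k - 1, h1⟩
  set e2 : Fin (k + 1) := ⟨k, h2⟩
  have hne : e1 ≠ e2 := by simp [e1, e2, Fin.ext_iff]; omega
  have hsum : ∑ i, sphCoord k γ i * sphCoord k α i
      = sphCoord k γ e1 * sphCoord k α e1 + sphCoord k γ e2 * sphCoord k α e2 := by
    rw [← Finset.sum_subset (Finset.subset_univ ({e1, e2} : Finset (Fin (k + 1))))]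
    · rw [Finset.sum_insert (by simp [hne]), Finset.sum_singleton]
    · intro i _ hi
      simp only [Finset.mem_insert, Finset.mem_singleton, e1, e2, Fin.ext_iff] at hi
      push_neg at hi
      have hlt : (i : ℕ) < k := by omega
      have hγi : γ ⟨(i : ℕ), hlt⟩ = Real.pi / 2 := by
        simp only [hγ]
        rw [if_neg (by omega)]
      simp [sphCoord, hlt, hγi, Real.cos_pi_div_two]
  rw [hsum]
  have hγ1 : sphCoord k γ e1 = Real.cos β := by
    simp only [sphCoord, e1, dif_pos hk1]
    rw [Finset.prod_eq_one, one_mul]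
    · have : γ ⟨k - 1, hk1⟩ = β := by simp only [hγ]; rw [if_pos (by omega)]
      rw [this]
    · intro j hj
      simp only [Finset.mem_filter] at hj
      have : γ j = Real.pi / 2 := by simp only [hγ]; rw [if_neg (by omega)]
      rw [this, Real.sin_pi_div_two]
  have hγ2 : sphCoord k γ e2 = Real.sin β := by
    simp only [sphCoord, e2, dif_neg (lt_irrefl k)]
    rw [Finset.prod_eq_single (⟨k - 1, hk1⟩ : Fin k)]
    · have : γ ⟨k - 1, hk1⟩ = β := by simp only [hγ]; rw [if_pos (by omega)]
      rw [this]
    · intro j _ hj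
      have : γ j = Real.pi / 2 := by
        simp only [hγ]
        rw [if_neg (by intro h; exact hj (by simp [Fin.ext_iff]; omega))]
      rw [this, Real.sin_pi_div_two]
    · intro h; exact absurd (Finset.mem_univ _) h
  have hα2 : sphCoord k α e2 =
      (∏ j ∈ Finset.univ.filter (fun j : Fin k => (j : ℕ) + 1 < k), Real.sin (α j)) *
        Real.sin (α ⟨k - 1, hk1⟩) := by
    simp only [sphCoord, e2, dif_neg (lt_irrefl k)]
    rw [← Finset.prod_filter_mul_prod_filter_not Finset.univ (fun j : Fin k => (j : ℕ) + 1 < k)]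
    congr 1
    rw [show Finset.univ.filter (fun j : Fin k => ¬ (j : ℕ) + 1 < k)
        = {(⟨k - 1, hk1⟩ : Fin k)} from ?_, Finset.prod_singleton]
    ext j
    simp only [Finset.mem_filter, Finset.mem_univ, true_and, Finset.mem_singleton, Fin.ext_iff]
    omega
  have hα1 : sphCoord k α e1 =
      (∏ j ∈ Finset.univ.filter (fun j : Fin k => (j : ℕ) + 1 < k), Real.sin (α j)) *
        Real.cos (α ⟨k - 1, hk1⟩) := by
    simp only [sphCoord, e1, dif_pos hk1]
    congr 2
    apply Finset.filter_congr
    intro j _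
    constructor <;> omega
  rw [hγ1, hγ2, hα1, hα2, Real.cos_sub]
  ring
end

section
/- Suppose ε₀ > 0, S(0) and S(ε₀) are both nonempty, and the set {⟨c, x⟩ : x ∈ S(0)} is bounded above. Then for every ε ∈ [0, ε₀]: S(ε) is nonempty, the set {⟨c, x⟩ : x ∈ S(ε)} is bounded above, and V(0) ≥ V(ε) ≥ (ε/ε₀)·V(ε₀) + (1 − ε/ε₀)·V(0). (The linear-program perturbation bound at the core of the proof of Lemma B.1: the optimal value is monotone and concave in the right-hand-side tightening.) -/
/-!
Tightening the right-hand side by `ε · v` with `v ≥ 0` shrinks the feasible set, which gives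
monotonicity of the value. For concavity, the constraints are jointly linear in `(x, ε)`, so the
convex combination `t • x₁ + (1 - t) • x₀` of points feasible at `ε₀` and at `0` is feasible at
`t * ε₀`; as the objective is linear, taking suprema over `x₁` and `x₀` separately bounds
`t * V ε₀ + (1 - t) * V 0` by `V (t * ε₀)`.
-/

open Pointwise Matrix

theorem Real.smul_sSup_add_smul_sSup_le {X Y Z : Set ℝ} {s t : ℝ} (hs : 0 ≤ s) (ht : 0 ≤ t)
    (hX : X.Nonempty) (hXb : BddAbove X) (hY : Y.Nonempty) (hYb : BddAbove Y)
    (hZb : BddAbove Z) (h : s • X + t • Y ⊆ Z) :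
    s * sSup X + t * sSup Y ≤ sSup Z := by
  have hsX : BddAbove (s • X) := by simpa using hXb.smul_of_nonneg hs
  have htY : BddAbove (t • Y) := by simpa using hYb.smul_of_nonneg ht
  calc s * sSup X + t * sSup Y = sSup (s • X + t • Y) := by
        rw [csSup_add (hX.smul_set) hsX (hY.smul_set) htY, Real.sSup_smul_of_nonneg hs,
          Real.sSup_smul_of_nonneg ht, smul_eq_mul, smul_eq_mul]
    _ ≤ sSup Z := csSup_le_csSup hZb (hX.smul_set.add hY.smul_set) h

theorem LinearMap.smul_sSup_image_add_smul_sSup_image_le {E : Type*} [AddCommMonoid E]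
    [Module ℝ E] (f : E →ₗ[ℝ] ℝ) {P Q R : Set E} {s t : ℝ} (hs : 0 ≤ s) (ht : 0 ≤ t)
    (hP : P.Nonempty) (hPb : BddAbove (f '' P)) (hQ : Q.Nonempty) (hQb : BddAbove (f '' Q))
    (hRb : BddAbove (f '' R)) (h : s • P + t • Q ⊆ R) :
    s * sSup (f '' P) + t * sSup (f '' Q) ≤ sSup (f '' R) := by
  refine Real.smul_sSup_add_smul_sSup_le hs ht (hP.image f) hPb (hQ.image f) hQb hRb ?_
  rw [← image_smul_set, ← image_smul_set, ← Set.image_add]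
  exact Set.image_mono h

section lpFeasible

variable {ι κ : Type*} [Fintype κ]

def lpFeasible (A : Matrix ι κ ℝ) (b v : ι → ℝ) (ε : ℝ) : Set (κ → ℝ) :=
  {x | (∀ j, 0 ≤ x j) ∧ ∀ i, (A *ᵥ x) i ≤ b i - ε * v i}

theorem lpFeasible_antitone (A : Matrix ι κ ℝ) (b : ι → ℝ) {v : ι → ℝ} (hv : 0 ≤ v) :
    Antitone (lpFeasible A b v) := by
  intro ε ε' hεε' x ⟨hx_nonneg, hx⟩
  refine ⟨hx_nonneg, fun i => (hx i).trans ?_⟩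
  gcongr
  exact hv i

theorem smul_lpFeasible_add_smul_lpFeasible_subset (A : Matrix ι κ ℝ) (b v : ι → ℝ)
    (ε ε' : ℝ) {s t : ℝ} (hs : 0 ≤ s) (ht : 0 ≤ t) (hst : s + t = 1) :
    s • lpFeasible A b v ε + t • lpFeasible A b v ε' ⊆ lpFeasible A b v (s * ε + t * ε') := by
  rintro _ ⟨_, ⟨x, ⟨hx_nonneg, hx⟩, rfl⟩, _, ⟨y, ⟨hy_nonneg, hy⟩, rfl⟩, rfl⟩
  refine ⟨fun j => ?_, fun i => ?_⟩
  · simp only [Pi.add_apply, Pi.smul_apply, smul_eq_mul]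
    have := hx_nonneg j
    have := hy_nonneg j
    positivity
  · calc (A *ᵥ (s • x + t • y)) i = s * (A *ᵥ x) i + t * (A *ᵥ y) i := by
          simp [mulVec_add, mulVec_smul]
      _ ≤ s * (b i - ε * v i) + t * (b i - ε' * v i) := by
          gcongr
          exacts [hx i, hy i]
      _ = b i - (s * ε + t * ε') * v i := by linear_combination b i * hst

end lpFeasible

theorem lp_perturbation_general (m n : ℕ)
    (A : Matrix (Fin m) (Fin n) ℝ) (b v : Fin m → ℝ) (c : Fin n → ℝ)
    (hv : ∀ i, v i = 0 ∨ v i = 1)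
    (ε₀ : ℝ) (hε₀ : 0 < ε₀)
    (S : ℝ → Set (Fin n → ℝ))
    (hS : ∀ ε, S ε = {x | (∀ j, 0 ≤ x j) ∧ ∀ i, A.mulVec x i ≤ b i - ε * v i})
    (V : ℝ → ℝ)
    (hV : ∀ ε, V ε = sSup ((fun x => ∑ j, c j * x j) '' S ε))
    (h0 : (S 0).Nonempty) (h1 : (S ε₀).Nonempty)
    (hbdd : BddAbove ((fun x => ∑ j, c j * x j) '' S 0)) :
    ∀ ε ∈ Set.Icc 0 ε₀,
      (S ε).Nonempty ∧ BddAbove ((fun x => ∑ j, c j * x j) '' S ε) ∧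
        V ε ≤ V 0 ∧ (ε / ε₀) * V ε₀ + (1 - ε / ε₀) * V 0 ≤ V ε := by
  rintro ε ⟨hε, hεε₀⟩
  obtain rfl : S = lpFeasible A b v := funext hS
  let f : (Fin n → ℝ) →ₗ[ℝ] ℝ := dotProductBilin ℝ ℝ c
  change BddAbove (f '' _) at hbdd
  change ∀ ε, V ε = sSup (f '' _) at hV
  change _ ∧ BddAbove (f '' _) ∧ _
  have hv_nonneg : 0 ≤ v := fun i => by rcases hv i with h | h <;> simp [h]
  have hS_anti := lpFeasible_antitone A b hv_nonneg
  set t := ε / ε₀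
  have ht : 0 ≤ t := div_nonneg hε hε₀.le
  have ht' : 0 ≤ 1 - t := sub_nonneg.2 (div_le_one_of_le₀ hεε₀ hε₀.le)
  have hcomb : t • lpFeasible A b v ε₀ + (1 - t) • lpFeasible A b v 0 ⊆ lpFeasible A b v ε := by
    convert smul_lpFeasible_add_smul_lpFeasible_subset A b v ε₀ 0 ht ht' (by ring) using 2
    simp [t, div_mul_cancel₀ ε hε₀.ne']
  have hbdd_mono {ε' : ℝ} (hε' : 0 ≤ ε') : BddAbove (f '' lpFeasible A b v ε') :=
    hbdd.mono (Set.image_mono (hS_anti hε'))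
  have hne : (lpFeasible A b v ε).Nonempty := (h1.smul_set.add h0.smul_set).mono hcomb
  refine ⟨hne, hbdd_mono hε, ?_, ?_⟩
  · rw [hV, hV]
    exact csSup_le_csSup hbdd (hne.image f) (Set.image_mono (hS_anti hε))
  · rw [hV, hV, hV]
    exact f.smul_sSup_image_add_smul_sSup_image_le ht ht' h1 (hbdd_mono hε₀.le) h0 hbdd
      (hbdd_mono hε) hcomb

/-- The linear-program perturbation bound at the core of the proof of Lemma B.1:
for feasible sets `S(ε) = {x ≥ 0 : A x ≤ b − ε·v}` with `v` a `0/1` vector and values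
`V(ε) = sup {⟨c, x⟩ : x ∈ S(ε)}`, if `S(0)` and `S(ε₀)` are nonempty and `V(0)` is finite,
then for every `ε ∈ [0, ε₀]` the problem is feasible with finite value and
`V(0) ≥ V(ε) ≥ (ε/ε₀)·V(ε₀) + (1 − ε/ε₀)·V(0)`. -/
theorem lp_perturbation (m n : ℕ) (hm : 0 < m) (hn : 0 < n)
    (A : Matrix (Fin m) (Fin n) ℝ) (b v : Fin m → ℝ) (c : Fin n → ℝ)
    (hv : ∀ i, v i = 0 ∨ v i = 1)
    (ε₀ : ℝ) (hε₀ : 0 < ε₀)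
    (S : ℝ → Set (Fin n → ℝ))
    (hS : ∀ ε, S ε = {x | (∀ j, 0 ≤ x j) ∧ ∀ i, A.mulVec x i ≤ b i - ε * v i})
    (V : ℝ → ℝ)
    (hV : ∀ ε, V ε = sSup ((fun x => ∑ j, c j * x j) '' S ε))
    (h0 : (S 0).Nonempty) (h1 : (S ε₀).Nonempty)
    (hbdd : BddAbove ((fun x => ∑ j, c j * x j) '' S 0)) :
    ∀ ε ∈ Set.Icc 0 ε₀,
      (S ε).Nonempty ∧ BddAbove ((fun x => ∑ j, c j * x j) '' S ε) ∧
        V ε ≤ V 0 ∧ (ε / ε₀) * V ε₀ + (1 - ε / ε₀) * V 0 ≤ V ε :=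
  lp_perturbation_general m n A b v c hv ε₀ hε₀ S hS V hV h0 h1 hbdd
end

section
/- Let β ∈ (0, π) and κ, χ, m, δ, a ∈ ℝ satisfy: 0 < χ, χ ≤ |β − π/2|, χ ≤ π/2 − |β − π/2|, χ ≤ 1/10; m > 0 and |κ| ≤ 1 − m/30; 0 ≤ δ ≤ χ·m/180; and |a − π/2| ≤ |β − π/2| + (3/2)·δ. Then |cos a · sin β · κ − sin a · cos β| ≥ sin β · χ · m / 120. (The derivative lower bound at the analytic core of the proof of Lemma B.2, used in the conditional sector-test analysis.) -/
/-!
Write `β = s + π/2`, `a = t + π/2`, so the quantity is `|sin s cos t - κ sin t cos s|` with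
`|t| ≤ |s| + u`, `u = 3δ/2`. Replacing `t` by the extreme value `|s| + u` and `|κ|` by `1 - ε`
(`ε = m/30`) leaves `-sin u + ε sin(|s| + u) cos |s| ≥ ε sin |s| cos |s| - u`, and the angle gap
gives `sin |s| cos |s| = sin (2|s|) / 2 ≥ 2χ/π ≥ χ/2`, so the gain `εχ/2 = χm/60` beats the loss
`u ≤ χm/120`.
-/

open Real

namespace Real

lemma two_div_pi_mul_le_sin_of_le_of_le_pi_sub {c x : ℝ} (hc : 0 ≤ c) (hcx : c ≤ x)
    (hxc : x ≤ π - c) : 2 / π * c ≤ sin x := by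
  rcases le_total x (π / 2) with hx | hx
  · calc 2 / π * c ≤ 2 / π * x := by gcongr
      _ ≤ sin x := mul_le_sin (hc.trans hcx) hx
  · calc 2 / π * c ≤ 2 / π * (π - x) := by gcongr; linarith
      _ ≤ sin (π - x) := mul_le_sin (by linarith) (by linarith)
      _ = sin x := sin_pi_sub x

lemma two_div_pi_mul_le_sin_mul_cos {c x : ℝ} (hc : 0 ≤ c) (hcx : c ≤ x)
    (hxc : x ≤ π / 2 - c) : 2 / π * c ≤ sin x * cos x := by
  have h := two_div_pi_mul_le_sin_of_le_of_le_pi_sub (c := 2 * c) (x := 2 * x)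
    (by positivity) (by linarith) (by linarith)
  rw [sin_two_mul] at h
  linarith

lemma mul_sin_abs_mul_cos_abs_sub_le {s t κ u ε : ℝ} (hu : 0 ≤ u) (hε : 0 ≤ ε)
    (ht : |t| ≤ |s| + u) (hsu : |s| + u ≤ π / 2) (hκ : |κ| ≤ 1 - ε) :
    ε * (sin |s| * cos |s|) - u ≤ |sin s * cos t - κ * sin t * cos s| := by
  have hs0 := abs_nonneg s
  have ht0 := abs_nonneg t
  have hsin_s : 0 ≤ sin |s| := sin_nonneg_of_nonneg_of_le_pi hs0 (by linarith [pi_pos])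
  have hsin_t : 0 ≤ sin |t| := sin_nonneg_of_nonneg_of_le_pi ht0 (by linarith [pi_pos])
  have hcos_s : 0 ≤ cos |s| := cos_nonneg_of_mem_Icc ⟨by linarith [pi_pos], by linarith⟩
  have hcos_t : 0 ≤ cos t := by
    rw [← cos_abs]; exact cos_nonneg_of_mem_Icc ⟨by linarith [pi_pos], by linarith⟩
  have hsin_mono : sin |s| ≤ sin (|s| + u) :=
    sin_le_sin_of_le_of_le_pi_div_two (by linarith [pi_pos]) hsu (by linarith)
  have hsin_t_le : sin |t| ≤ sin (|s| + u) :=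
    sin_le_sin_of_le_of_le_pi_div_two (by linarith [pi_pos]) hsu ht
  have hcos_t_ge : cos (|s| + u) ≤ cos t := by
    rw [← cos_abs t]; exact cos_le_cos_of_nonneg_of_le_pi ht0 (by linarith [pi_pos]) ht
  calc ε * (sin |s| * cos |s|) - u
      ≤ ε * (sin (|s| + u) * cos |s|) - sin u := by
        gcongr
        exact sin_le hu
    -- `sin |s| cos (|s| + u) - sin (|s| + u) cos |s| = -sin u`
    _ = sin |s| * cos (|s| + u) - (1 - ε) * sin (|s| + u) * cos |s| := by
        rw [sin_add, cos_add]
        linear_combination sin u * sin_sq_add_cos_sq |s|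
    _ ≤ sin |s| * cos t - |κ| * sin |t| * cos |s| := by
        gcongr
        exact (abs_nonneg κ).trans hκ
    _ = |sin s * cos t| - |κ * sin t * cos s| := by
        rw [abs_mul, abs_mul, abs_mul, abs_sin_eq_sin_abs_of_abs_le_pi (by linarith [pi_pos]),
          abs_sin_eq_sin_abs_of_abs_le_pi (by linarith [pi_pos]), abs_of_nonneg hcos_t,
          ← cos_abs s, abs_of_nonneg hcos_s]
    _ ≤ |sin s * cos t - κ * sin t * cos s| := abs_sub_abs_le_abs_sub _ _

end Real

theorem derivative_lower_bound_general (β κ χ m δ a : ℝ)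
    (hχ0 : 0 < χ) (hχ1 : χ ≤ |β - Real.pi / 2|) (hχ2 : χ ≤ Real.pi / 2 - |β - Real.pi / 2|)
    (hm : 0 < m) (hκ : |κ| ≤ 1 - m / 30)
    (hδ0 : 0 ≤ δ) (hδ1 : δ ≤ χ * m / 180)
    (ha : |a - Real.pi / 2| ≤ |β - Real.pi / 2| + (3 / 2) * δ) :
    Real.sin β * χ * m / 120 ≤ |Real.cos a * Real.sin β * κ - Real.sin a * Real.cos β| := by
  obtain ⟨s, rfl⟩ : ∃ s, β = s + π / 2 := ⟨β - π / 2, by ring⟩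
  obtain ⟨t, rfl⟩ : ∃ t, a = t + π / 2 := ⟨a - π / 2, by ring⟩
  simp only [add_sub_cancel_right] at hχ1 hχ2 ha
  have hgap : 2 / π * χ ≤ sin |s| * cos |s| :=
    two_div_pi_mul_le_sin_mul_cos hχ0.le hχ1 (by linarith)
  have hχ_half : χ / 2 ≤ 2 / π * χ := by
    rw [div_mul_eq_mul_div, le_div_iff₀ pi_pos]; nlinarith [pi_le_four]
  have hm30 : m ≤ 30 := by linarith [abs_nonneg κ]
  have hδχ : 3 / 2 * δ ≤ χ := by nlinarith
  have hcore := mul_sin_abs_mul_cos_abs_sub_le (κ := κ) (ε := m / 30) (by positivity)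
    (by positivity) ha (by linarith) hκ
  rw [sin_add_pi_div_two, cos_add_pi_div_two, cos_add_pi_div_two, sin_add_pi_div_two]
  calc cos s * χ * m / 120 ≤ χ * m / 120 := by
        have := cos_le_one s
        have := mul_pos hχ0 hm
        nlinarith
    _ ≤ m / 30 * (sin |s| * cos |s|) - 3 / 2 * δ := by nlinarith
    _ ≤ |sin s * cos t - κ * sin t * cos s| := hcore
    _ = |-sin t * cos s * κ - cos t * -sin s| := by congr 1; ring

/-- The derivative lower bound at the analytic core of the proof of Lemma B.2. -/
theorem derivative_lower_bound (β κ χ m δ a : ℝ)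
    (hβ : β ∈ Set.Ioo 0 Real.pi)
    (hχ0 : 0 < χ) (hχ1 : χ ≤ |β - Real.pi / 2|) (hχ2 : χ ≤ Real.pi / 2 - |β - Real.pi / 2|)
    (hχ3 : χ ≤ 1 / 10)
    (hm : 0 < m) (hκ : |κ| ≤ 1 - m / 30)
    (hδ0 : 0 ≤ δ) (hδ1 : δ ≤ χ * m / 180)
    (ha : |a - Real.pi / 2| ≤ |β - Real.pi / 2| + (3 / 2) * δ) :
    Real.sin β * χ * m / 120 ≤ |Real.cos a * Real.sin β * κ - Real.sin a * Real.cos β| :=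
  derivative_lower_bound_general β κ χ m δ a hχ0 hχ1 hχ2 hm hκ hδ0 hδ1 ha
end

section
/- Let β ∈ (0, π) and κ, χ, m, δ, α ∈ ℝ satisfy: 0 < χ, χ ≤ |β − π/2|, χ ≤ π/2 − |β − π/2|, χ ≤ 1/10; m > 0 and |κ| ≤ 1 − m/30; 0 ≤ δ ≤ χ·m/180; and |α − π/2| ≤ |β − π/2| + δ/2. Define F(a) := cos a · cos β + sin a · sin β · κ. Then max(F(α + δ), F(α − δ)) ≥ F(α) + δ · sin β · χ · m / 120. (The endpoint-gain inequality, which is the conclusion form of Lemma B.2: on the interval [α − δ, α + δ] the function F is strictly monotone with slope of magnitude at least sin β · χ · m / 120, so one endpoint value exceeds the midpoint value by at least δ times that bound.) -/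
/-!
Writing `G` for the derivative of `F` at `α`, the addition formulas give
`max (F (α + δ)) (F (α - δ)) = cos δ · F α + sin δ · |G|`, and `F α ^ 2 + G ^ 2 ≤ 1`.
So it suffices to bound the slope `|G|` from below by `sin β · χ m / 120 + (3/5) δ`: the
curvature loss `(1 - cos δ) F α ≤ δ² / 2` is then paid for by the extra `(3/5) δ²`.
In the coordinates `x = |α - π/2|`, `c = |β - π/2|` one has
`|G| ≥ sin (c - x) + (m/30) sin x cos c`; when `x ≤ c/2` the first term is at least
`sin (χ/2)`, and otherwise the second is at least `(m/30) sin (2χ) / 4` while the first is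
at least `-δ/2`.
-/

open Real

namespace EndpointGain

lemma max_cos_mul_add_sin_mul_add_sub (A B α δ : ℝ) (hδ : 0 ≤ sin δ) :
    max (cos (α + δ) * A + sin (α + δ) * B) (cos (α - δ) * A + sin (α - δ) * B) =
      cos δ * (cos α * A + sin α * B) + sin δ * |cos α * B - sin α * A| := by
  rw [← abs_of_nonneg hδ, ← abs_mul, abs_eq_max_neg, ← max_add_add_left, cos_add, sin_add,
    cos_sub, sin_sub]
  congr 1 <;> ring

lemma sq_cos_mul_add_sin_mul_add_sq (A B α : ℝ) :
    (cos α * A + sin α * B) ^ 2 + (cos α * B - sin α * A) ^ 2 = A ^ 2 + B ^ 2 := by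
  linear_combination (A ^ 2 + B ^ 2) * sin_sq_add_cos_sq α

lemma add_mul_le_cos_mul_add_sin_mul {u v g δ : ℝ} (hu : u ≤ 1) (hv0 : 0 ≤ v) (hv1 : v ≤ 1)
    (hgv : g + 3 / 5 * δ ≤ v) (hδ0 : 0 ≤ δ) (hδ1 : δ ≤ 2 / 5) :
    u + δ * g ≤ cos δ * u + sin δ * v := by
  have hcos : 1 - δ ^ 2 / 2 ≤ cos δ := one_sub_sq_div_two_le_cos
  have hsin : δ - δ ^ 3 / 6 ≤ sin δ := sin_ge_sub_cube hδ0
  have h1 : (1 - cos δ) * u ≤ 1 - cos δ := mul_le_of_le_one_right (by linarith [cos_le_one δ]) hu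
  have h2 : (δ - δ ^ 3 / 6) * v ≤ sin δ * v := mul_le_mul_of_nonneg_right hsin hv0
  nlinarith [mul_le_mul_of_nonneg_left hv1 (pow_nonneg hδ0 3)]

lemma sin_le_sin_of_le_of_le_pi_sub {x y : ℝ} (hy : 0 ≤ y) (hyx : y ≤ x) (hx : x ≤ π - y) :
    sin y ≤ sin x := by
  rcases le_total x (π / 2) with hx2 | hx2
  · exact sin_le_sin_of_le_of_le_pi_div_two (by linarith [pi_pos]) hx2 hyx
  · rw [← sin_pi_sub x]
    exact sin_le_sin_of_le_of_le_pi_div_two (by linarith [pi_pos]) (by linarith) (by linarith)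

lemma sin_two_mul_le_four_mul_sin_half_mul_cos {c : ℝ} (hc0 : 0 ≤ c) (hc : c ≤ π / 2) :
    sin (2 * c) ≤ 4 * (sin (c / 2) * cos c) := by
  have hsin : 0 ≤ sin (c / 2) :=
    sin_nonneg_of_nonneg_of_le_pi (by linarith) (by linarith [pi_pos])
  have hcos : 0 ≤ cos c := cos_nonneg_of_mem_Icc ⟨by linarith [pi_pos], hc⟩
  have hsc : sin c = 2 * sin (c / 2) * cos (c / 2) := by
    rw [← sin_two_mul]; ring_nf
  rw [sin_two_mul, hsc]
  nlinarith [mul_nonneg (mul_nonneg hsin hcos) (sub_nonneg.2 (cos_le_one (c / 2)))]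

lemma sin_sub_abs_add_mul_le_abs {a b κ μ : ℝ} (ha : |a| ≤ π / 2) (hb : |b| ≤ π / 2)
    (hκ : |κ| ≤ 1 - μ) :
    sin (|b| - |a|) + μ * (sin |a| * cos |b|) ≤ |cos a * sin b - κ * sin a * cos b| := by
  have hpi := pi_pos
  have hsa : |sin a| = sin |a| := abs_sin_eq_sin_abs_of_abs_le_pi (by linarith)
  have hsb : |sin b| = sin |b| := abs_sin_eq_sin_abs_of_abs_le_pi (by linarith)
  have hca : 0 ≤ cos |a| := cos_nonneg_of_mem_Icc ⟨by linarith [abs_nonneg a], ha⟩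
  have hcb : 0 ≤ cos |b| := cos_nonneg_of_mem_Icc ⟨by linarith [abs_nonneg b], hb⟩
  have hprod : 0 ≤ sin |a| * cos |b| := mul_nonneg (hsa ▸ abs_nonneg _) hcb
  calc sin (|b| - |a|) + μ * (sin |a| * cos |b|)
      ≤ cos |a| * sin |b| - |κ| * (sin |a| * cos |b|) := by
        rw [sin_sub]; linarith [mul_le_mul_of_nonneg_right hκ hprod]
    _ = |cos a * sin b| - |κ * sin a * cos b| := by
        rw [abs_mul, abs_mul, abs_mul, hsa, hsb, ← cos_abs a, ← cos_abs b, abs_of_nonneg hca,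
          abs_of_nonneg hcb]
        ring
    _ ≤ |cos a * sin b - κ * sin a * cos b| := abs_sub_abs_le_abs_sub _ _

section SlopeBound

variable {c x χ m δ : ℝ}

lemma slope_bound_of_le_half (hχ0 : 0 < χ) (hχ : χ ≤ 1 / 10) (hc : χ ≤ c)
    (hcπ : c ≤ π / 2 - χ) (hx0 : 0 ≤ x) (hxc : x ≤ c / 2) (hm0 : 0 < m) (hm : m ≤ 30)
    (hδ : δ ≤ χ * m / 180) :
    cos c * χ * m / 120 + 3 / 5 * δ ≤ sin (c - x) + m / 30 * (sin x * cos c) := by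
  have hpi := pi_pos
  have hcos0 : 0 ≤ cos c := cos_nonneg_of_mem_Icc ⟨by linarith, by linarith⟩
  have hsin : sin (χ / 2) ≤ sin (c - x) :=
    sin_le_sin_of_le_of_le_pi_div_two (by linarith) (by linarith) (by linarith)
  have hχ2 : χ / 2 - (χ / 2) ^ 3 / 6 ≤ sin (χ / 2) := sin_ge_sub_cube (by linarith)
  have hgain : 0 ≤ m / 30 * (sin x * cos c) :=
    mul_nonneg (by positivity) (mul_nonneg (sin_nonneg_of_nonneg_of_le_pi hx0 (by linarith)) hcos0)
  have hcm : cos c * χ * m ≤ χ * 30 := by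
    nlinarith [mul_le_mul_of_nonneg_left (cos_le_one c) (mul_pos hχ0 hm0).le]
  have hδχ : δ ≤ χ / 6 := by nlinarith
  have hcube : χ ^ 3 ≤ χ / 100 := by
    nlinarith [mul_le_mul hχ hχ hχ0.le (by norm_num : (0 : ℝ) ≤ 1 / 10)]
  linarith

lemma slope_bound_of_half_le (hχ0 : 0 < χ) (hχ : χ ≤ 1 / 10) (hc : χ ≤ c)
    (hcπ : c ≤ π / 2 - χ) (hxc : c / 2 ≤ x) (hx : x ≤ c + δ / 2) (hm0 : 0 < m) (hm : m ≤ 30)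
    (hδ0 : 0 ≤ δ) (hδ : δ ≤ χ * m / 180) :
    cos c * χ * m / 120 + 3 / 5 * δ ≤ sin (c - x) + m / 30 * (sin x * cos c) := by
  have hpi := pi_pos
  have hcos0 : 0 ≤ cos c := cos_nonneg_of_mem_Icc ⟨by linarith, by linarith⟩
  have hδχ : δ ≤ χ / 6 := by nlinarith
  have hcube : χ ^ 3 ≤ χ / 100 := by
    nlinarith [mul_le_mul hχ hχ hχ0.le (by norm_num : (0 : ℝ) ≤ 1 / 10)]
  have hsub : -(δ / 2) ≤ sin (c - x) := by
    rcases le_total 0 (c - x) with h | h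
    · linarith [sin_nonneg_of_nonneg_of_le_pi h (by linarith)]
    · linarith [le_sin h]
  have hsin2χ : 2 * χ - (2 * χ) ^ 3 / 6 ≤ sin (2 * χ) := sin_ge_sub_cube (by linarith)
  have h2χ : sin (2 * χ) ≤ sin (2 * c) :=
    sin_le_sin_of_le_of_le_pi_sub (by linarith) (by linarith) (by linarith)
  have hhalf : sin (2 * c) ≤ 4 * (sin (c / 2) * cos c) :=
    sin_two_mul_le_four_mul_sin_half_mul_cos (by linarith) (by linarith)
  have hx : sin (c / 2) * cos c ≤ sin x * cos c :=
    mul_le_mul_of_nonneg_right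
      (sin_le_sin_of_le_of_le_pi_div_two (by linarith) (by linarith) hxc) hcos0
  have hprod : 99 / 200 * χ ≤ sin x * cos c := by linarith
  nlinarith [mul_le_mul_of_nonneg_left hprod hm0.le,
    mul_le_mul_of_nonneg_left (cos_le_one c) (mul_pos hχ0 hm0).le]

lemma slope_bound (hχ0 : 0 < χ) (hχ : χ ≤ 1 / 10) (hc : χ ≤ c) (hcπ : c ≤ π / 2 - χ)
    (hx0 : 0 ≤ x) (hx : x ≤ c + δ / 2) (hm0 : 0 < m) (hm : m ≤ 30) (hδ0 : 0 ≤ δ)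
    (hδ : δ ≤ χ * m / 180) :
    cos c * χ * m / 120 + 3 / 5 * δ ≤ sin (c - x) + m / 30 * (sin x * cos c) := by
  rcases le_total x (c / 2) with hxc | hxc
  · exact slope_bound_of_le_half hχ0 hχ hc hcπ hx0 hxc hm0 hm hδ
  · exact slope_bound_of_half_le hχ0 hχ hc hcπ hxc hx hm0 hm hδ0 hδ

end SlopeBound

end EndpointGain

open EndpointGain in
theorem endpoint_gain_general (β κ χ m δ α : ℝ)
    (hχ0 : 0 < χ) (hχ1 : χ ≤ |β - Real.pi / 2|) (hχ2 : χ ≤ Real.pi / 2 - |β - Real.pi / 2|)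
    (hχ3 : χ ≤ 1 / 10)
    (hm : 0 < m) (hκ : |κ| ≤ 1 - m / 30)
    (hδ0 : 0 ≤ δ) (hδ1 : δ ≤ χ * m / 180)
    (hα : |α - Real.pi / 2| ≤ |β - Real.pi / 2| + δ / 2)
    (F : ℝ → ℝ)
    (hF : ∀ a, F a = Real.cos a * Real.cos β + Real.sin a * Real.sin β * κ) :
    F α + δ * Real.sin β * χ * m / 120 ≤ max (F (α + δ)) (F (α - δ)) := by
  have hm30 : m ≤ 30 := by linarith [abs_nonneg κ]
  have hδχ : δ ≤ χ / 6 := by nlinarith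
  simp only [hF, mul_assoc (sin _) (sin β) κ]
  rw [max_cos_mul_add_sin_mul_add_sub _ _ _ _
    (sin_nonneg_of_nonneg_of_le_pi hδ0 (by linarith [pi_gt_three]))]
  set u := cos α * cos β + sin α * (sin β * κ)
  set G := cos α * (sin β * κ) - sin α * cos β
  have hamp : u ^ 2 + G ^ 2 ≤ 1 := by
    have hκ1 : κ ^ 2 ≤ 1 := (sq_le_one_iff_abs_le_one κ).2 (by linarith)
    rw [sq_cos_mul_add_sin_mul_add_sq, mul_pow]
    nlinarith [sin_sq_add_cos_sq β, mul_le_of_le_one_right (sq_nonneg (sin β)) hκ1]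
  have hG : G = cos (α - π / 2) * sin (β - π / 2) - κ * sin (α - π / 2) * cos (β - π / 2) := by
    simp only [cos_sub_pi_div_two, sin_sub_pi_div_two, G]; ring
  have hsβ : sin β = cos |β - π / 2| := by rw [cos_abs, cos_sub_pi_div_two]
  have hslope : sin β * χ * m / 120 + 3 / 5 * δ ≤ |G| := by
    rw [hG, hsβ]
    refine (slope_bound hχ0 hχ3 hχ1 (by linarith) (abs_nonneg _) hα hm hm30 hδ0 hδ1).trans ?_
    exact sin_sub_abs_add_mul_le_abs (by linarith) (by linarith [abs_nonneg (β - π / 2)]) hκ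
  have hu : |u| ≤ 1 := (sq_le_one_iff_abs_le_one u).1 (by nlinarith [sq_nonneg G])
  have hGle : |G| ≤ 1 := (sq_le_one_iff_abs_le_one G).1 (by nlinarith [sq_nonneg u])
  calc u + δ * sin β * χ * m / 120 = u + δ * (sin β * χ * m / 120) := by ring
    _ ≤ cos δ * u + sin δ * |G| :=
      add_mul_le_cos_mul_add_sin_mul (le_of_abs_le hu) (abs_nonneg G) hGle hslope hδ0
        (by linarith)

/-- The endpoint-gain inequality (conclusion form of Lemma B.2). -/
theorem endpoint_gain (β κ χ m δ α : ℝ)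
    (hβ : β ∈ Set.Ioo 0 Real.pi)
    (hχ0 : 0 < χ) (hχ1 : χ ≤ |β - Real.pi / 2|) (hχ2 : χ ≤ Real.pi / 2 - |β - Real.pi / 2|)
    (hχ3 : χ ≤ 1 / 10)
    (hm : 0 < m) (hκ : |κ| ≤ 1 - m / 30)
    (hδ0 : 0 ≤ δ) (hδ1 : δ ≤ χ * m / 180)
    (hα : |α - Real.pi / 2| ≤ |β - Real.pi / 2| + δ / 2)
    (F : ℝ → ℝ)
    (hF : ∀ a, F a = Real.cos a * Real.cos β + Real.sin a * Real.sin β * κ) :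
    F α + δ * Real.sin β * χ * m / 120 ≤ max (F (α + δ)) (F (α - δ)) :=
  endpoint_gain_general β κ χ m δ α hχ0 hχ1 hχ2 hχ3 hm hκ hδ0 hδ1 hα F hF
end
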